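/- arXiv:1809.09990 — 10 statements merged into one kernel-verified Lean document; each statement's English description precedes it below -/
import Mathlib

section
/- Let S be a proper set of intervals sorted by right endpoints, and let t be any interval. If t intersects both s_i and s_{j'} with i < j < j', then t intersects s_j. In other words, for any interval t, the set of indices of intervals in S intersecting t is a set of consecutive integers. -/
/-!
Two closed intervals meet iff each left endpoint lies below the other right endpoint.
Since `s_j` ends after `s_i` and starts before `s_{j'}`, `t` reaching `s_i` from the left
and `s_{j'}` from the right forces it to reach `s_j`.
-/

namespace Set

variable {α : Type*} [LinearOrder α]

theorem Icc_inter_Icc_nonempty_iff {a₁ b₁ a₂ b₂ : α} :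
    (Icc a₁ b₁ ∩ Icc a₂ b₂).Nonempty ↔ a₁ ≤ b₁ ∧ a₂ ≤ b₂ ∧ a₁ ≤ b₂ ∧ a₂ ≤ b₁ := by
  rw [Icc_inter_Icc, nonempty_Icc, sup_le_iff, le_inf_iff, le_inf_iff]
  tauto

theorem Icc_inter_Icc_nonempty_of_between {a b l₁ r₁ l₂ r₂ l₃ r₃ : α}
    (h₂ : l₂ ≤ r₂) (hr : r₁ ≤ r₂) (hl : l₂ ≤ l₃)
    (h₁ : (Icc a b ∩ Icc l₁ r₁).Nonempty) (h₃ : (Icc a b ∩ Icc l₃ r₃).Nonempty) :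
    (Icc a b ∩ Icc l₂ r₂).Nonempty := by
  rw [Icc_inter_Icc_nonempty_iff] at h₁ h₃ ⊢
  obtain ⟨hab, -, har₁, -⟩ := h₁
  obtain ⟨-, -, -, hl₃b⟩ := h₃
  exact ⟨hab, h₂, har₁.trans hr, hl.trans hl₃b⟩

end Set

theorem proper_intervals_consecutive_intersection_general {k : ℕ} (l r : Fin k → ℝ)
    (hlr : ∀ i, l i ≤ r i)
    (hr : StrictMono r) (hl : StrictMono l)
    (a b : ℝ)
    (i j j' : Fin k) (hij : i < j) (hjj' : j < j')
    (hi : (Set.Icc a b ∩ Set.Icc (l i) (r i)).Nonempty)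
    (hj' : (Set.Icc a b ∩ Set.Icc (l j') (r j')).Nonempty) :
    (Set.Icc a b ∩ Set.Icc (l j) (r j)).Nonempty :=
  Set.Icc_inter_Icc_nonempty_of_between (hlr j) (hr hij).le (hl hjj').le hi hj'

/-- For a proper set of intervals sorted by right endpoints (hence
also by left endpoints), the set of intervals intersecting any fixed interval `t = [a,b]`
is consecutive: if `t` meets `s_i` and `s_{j'}` with `i < j < j'`, then `t` meets `s_j`. -/
theorem proper_intervals_consecutive_intersection {k : ℕ} (l r : Fin k → ℝ)
    (hlr : ∀ i, l i ≤ r i)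
    (hr : StrictMono r) (hl : StrictMono l)
    (a b : ℝ) (hab : a ≤ b)
    (i j j' : Fin k) (hij : i < j) (hjj' : j < j')
    (hi : (Set.Icc a b ∩ Set.Icc (l i) (r i)).Nonempty)
    (hj' : (Set.Icc a b ∩ Set.Icc (l j') (r j')).Nonempty) :
    (Set.Icc a b ∩ Set.Icc (l j) (r j)).Nonempty :=
  proper_intervals_consecutive_intersection_general l r hlr hr hl a b i j j' hij hjj' hi hj'
end

section
/- Let S be a proper set of intervals and T ⊆ S. The 0-1 constraint matrix M whose rows are indexed by T, columns by S (sorted by right endpoint), with M[t][s] = 1 iff intervals t and s intersect, has the consecutive-ones property in each row, and hence is totally unimodular. -/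
attribute [local instance] Classical.propDecidable

/-!
Since no interval of a proper family contains another, sorting by right endpoints also sorts by
left endpoints, and then the intervals meeting a fixed interval form a contiguous block: the ones
in each row are consecutive.

A square 0-1 matrix whose rows are intervals of columns has determinant `0` or `±1`: if the first
column is zero the determinant vanishes; otherwise subtract the shortest row starting in the first
column from the other rows starting there. The rows stay intervals, the first column becomes a unit
vector, and Laplace expansion along it reduces the size. Sorting the columns of an arbitrary square
submatrix only changes its determinant by a sign.
-/

open Set

section Intervals

variable {ι α : Type*} [LinearOrder α]

theorem Set.Icc_inter_Icc_nonempty_iff_s2 {a b c d : α} (hab : a ≤ b) (hcd : c ≤ d) :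
    (Icc a b ∩ Icc c d).Nonempty ↔ c ≤ b ∧ a ≤ d := by
  rw [Icc_inter_Icc, nonempty_Icc, sup_le_iff, le_inf_iff, le_inf_iff]
  exact ⟨fun h => ⟨h.2.1, h.1.2⟩, fun h => ⟨⟨hab, h.2⟩, h.1, hcd⟩⟩

theorem monotone_left_of_not_Icc_subset [PartialOrder ι] {l r : ι → α} (hr : Monotone r)
    (proper : ∀ i j : ι, i ≠ j → ¬ Icc (l j) (r j) ⊆ Icc (l i) (r i)) : Monotone l := by
  intro i j hij
  by_contra! hlt
  have hne : i ≠ j := by rintro rfl; exact lt_irrefl _ hlt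
  exact proper j i hne.symm (Icc_subset_Icc hlt.le (hr hij))

theorem Icc_inter_Icc_nonempty_of_le_of_le [Preorder ι] {l r : ι → α} (hl : Monotone l)
    (hr : Monotone r) (hlr : ∀ i, l i ≤ r i) {t s₁ s₂ s₃ : ι} (h₁₂ : s₁ ≤ s₂) (h₂₃ : s₂ ≤ s₃)
    (h₁ : (Icc (l t) (r t) ∩ Icc (l s₁) (r s₁)).Nonempty)
    (h₃ : (Icc (l t) (r t) ∩ Icc (l s₃) (r s₃)).Nonempty) :
    (Icc (l t) (r t) ∩ Icc (l s₂) (r s₂)).Nonempty := by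
  rw [Icc_inter_Icc_nonempty_iff_s2 (hlr _) (hlr _)] at h₁ h₃ ⊢
  exact ⟨(hl h₂₃).trans h₃.1, h₁.2.trans (hr h₁₂)⟩

end Intervals

namespace Matrix

variable {m n R : Type*}

def IsZeroOne [Zero R] [One R] (A : Matrix m n R) : Prop :=
  ∀ i j, A i j = 0 ∨ A i j = 1

def HasConsecutiveOnes [Preorder n] [One R] (A : Matrix m n R) : Prop :=
  ∀ i j₁ j₂ j₃, j₁ < j₂ → j₂ < j₃ → A i j₁ = 1 → A i j₃ = 1 → A i j₂ = 1

def HasIntervalRows [Zero R] [One R] {p : ℕ} (A : Matrix m (Fin p) R) : Prop :=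
  ∀ i, ∃ a b : ℕ, ∀ j, A i j = if a ≤ j.val ∧ j.val < b then 1 else 0

theorem IsZeroOne.submatrix [Zero R] [One R] {m' n' : Type*} {A : Matrix m n R}
    (hA : A.IsZeroOne) (f : m' → m) (g : n' → n) : (A.submatrix f g).IsZeroOne :=
  fun i j => hA (f i) (g j)

theorem HasConsecutiveOnes.submatrix [Preorder n] [One R] {m' n' : Type*} [Preorder n']
    {A : Matrix m n R} (hA : A.HasConsecutiveOnes) (f : m' → m) {g : n' → n}
    (hg : StrictMono g) : (A.submatrix f g).HasConsecutiveOnes :=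
  fun i _ _ _ h₁₂ h₂₃ => hA (f i) _ _ _ (hg h₁₂) (hg h₂₃)

theorem HasConsecutiveOnes.hasIntervalRows [Zero R] [One R] {p : ℕ} {A : Matrix m (Fin p) R}
    (hA : A.HasConsecutiveOnes) (h01 : A.IsZeroOne) : A.HasIntervalRows := by
  intro i
  set S := Finset.univ.filter fun j => A i j = 1
  have hzero : ∀ j, j ∉ S → A i j = 0 := fun j hj =>
    (h01 i j).resolve_right fun h => hj (Finset.mem_filter.2 ⟨Finset.mem_univ j, h⟩)
  by_cases hS : S.Nonempty
  · have hmin : A i (S.min' hS) = 1 := (Finset.mem_filter.1 (S.min'_mem hS)).2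
    have hmax : A i (S.max' hS) = 1 := (Finset.mem_filter.1 (S.max'_mem hS)).2
    refine ⟨S.min' hS, S.max' hS + 1, fun j => ?_⟩
    split_ifs with hj
    · rw [← Fin.le_def, Nat.lt_succ_iff, ← Fin.le_def] at hj
      rcases hj.1.eq_or_lt with rfl | h₁
      · exact hmin
      rcases hj.2.eq_or_lt with rfl | h₂
      · exact hmax
      exact hA i _ _ _ h₁ h₂ hmin hmax
    · refine hzero j fun hjS => hj ⟨?_, ?_⟩
      · exact Fin.le_def.1 (S.min'_le j hjS)
      · exact Nat.lt_succ_of_le (Fin.le_def.1 (S.le_max' j hjS))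
  · refine ⟨0, 0, fun j => ?_⟩
    rw [if_neg (by omega)]
    exact hzero j fun hj => hS ⟨j, hj⟩

theorem HasIntervalRows.submatrix_succ [Zero R] [One R] {m' : Type*} {p : ℕ}
    {A : Matrix m (Fin (p + 1)) R} (hA : A.HasIntervalRows) (f : m' → m) :
    (A.submatrix f Fin.succ).HasIntervalRows := by
  intro i
  obtain ⟨a, b, hab⟩ := hA (f i)
  exact ⟨a - 1, b - 1, fun j => by
    rw [submatrix_apply, hab, Fin.val_succ]
    exact if_congr (by omega) rfl rfl⟩

section CommRing

variable [CommRing R]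

theorem neg_mem_range_signType_cast_iff {x : R} :
    -x ∈ range (SignType.cast : SignType → R) ↔ x ∈ range (SignType.cast : SignType → R) := by
  constructor
  · rintro ⟨s, hs⟩
    exact ⟨-s, by rw [SignType.coe_neg, hs, neg_neg]⟩
  · rintro ⟨s, hs⟩
    exact ⟨-s, by rw [SignType.coe_neg, hs]⟩

theorem neg_one_pow_mul_mem_range_signType_cast_iff (k : ℕ) {x : R} :
    (-1) ^ k * x ∈ range (SignType.cast : SignType → R) ↔
      x ∈ range (SignType.cast : SignType → R) := by
  rcases neg_one_pow_eq_or R k with h | h <;>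
    simp only [h, one_mul, neg_one_mul, neg_mem_range_signType_cast_iff]

theorem det_submatrix_perm_mem_range_signType_cast_iff {p : ℕ} (A : Matrix (Fin p) (Fin p) R)
    (σ : Equiv.Perm (Fin p)) :
    (A.submatrix id σ).det ∈ range (SignType.cast : SignType → R) ↔
      A.det ∈ range (SignType.cast : SignType → R) := by
  rw [det_permute']
  rcases Int.units_eq_one_or (Equiv.Perm.sign σ) with h | h <;>
    simp only [h, Units.val_one, Units.val_neg, Int.cast_one, Int.cast_neg, one_mul, neg_one_mul,
      neg_mem_range_signType_cast_iff]

theorem det_eq_neg_one_pow_mul_det_of_col_zero_eq {p : ℕ} {A : Matrix (Fin (p + 1)) (Fin (p + 1)) R}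
    {i₀ : Fin (p + 1)} (hcol : ∀ i, A i 0 = if i = i₀ then 1 else 0) :
    A.det = (-1) ^ (i₀ : ℕ) * (A.submatrix i₀.succAbove Fin.succ).det := by
  rw [det_succ_column_zero, Finset.sum_eq_single i₀ (fun i _ hi => by simp [hcol, hi])
    (fun h => absurd (Finset.mem_univ i₀) h), hcol, if_pos rfl, mul_one]

theorem HasIntervalRows.exists_col_zero_eq {p : ℕ} {B : Matrix (Fin (p + 1)) (Fin (p + 1)) R}
    (hB : B.HasIntervalRows) :
    (∀ i, B i 0 = 0) ∨ ∃ (B' : Matrix (Fin (p + 1)) (Fin (p + 1)) R) (i₀ : Fin (p + 1)),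
      B'.HasIntervalRows ∧ B'.det = B.det ∧ ∀ i, B' i 0 = if i = i₀ then 1 else 0 := by
  choose a b hab using hB
  set S := Finset.univ.filter fun i => a i = 0 ∧ 0 < b i
  by_cases hS : S.Nonempty
  swap
  · left
    intro i
    have hi : ¬ (a i = 0 ∧ 0 < b i) := fun h => hS ⟨i, by simpa [S] using h⟩
    rw [hab, if_neg (by simpa using hi)]
  right
  obtain ⟨i₀, hi₀S, hi₀min⟩ := S.exists_min_image b hS
  have hi₀ : a i₀ = 0 ∧ 0 < b i₀ := (Finset.mem_filter.1 hi₀S).2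
  -- `i₀` is the shortest row starting in column 0; it is subtracted from the other such rows,
  -- which then start at column `b i₀`.
  set c : Fin (p + 1) → R := fun i => if i ∈ S ∧ i ≠ i₀ then -1 else 0
  set a' : Fin (p + 1) → ℕ := fun i => if i ∈ S ∧ i ≠ i₀ then b i₀ else a i
  set B' : Matrix (Fin (p + 1)) (Fin (p + 1)) R := of fun i j => B i j + c i * B i₀ j
  have hB' : ∀ i j, B' i j = if a' i ≤ j.val ∧ j.val < b i then 1 else 0 := by
    intro i j
    by_cases hi : i ∈ S ∧ i ≠ i₀
    · have hiS : a i = 0 ∧ 0 < b i := (Finset.mem_filter.1 hi.1).2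
      have hle : b i₀ ≤ b i := hi₀min i hi.1
      simp only [B', c, a', of_apply, if_pos hi, hab, hiS.1, hi₀.1]
      split_ifs <;> first | (exfalso; omega) | norm_num
    · simp only [B', c, a', of_apply, if_neg hi, hab, zero_mul, add_zero]
  refine ⟨B', i₀, fun i => ⟨a' i, b i, hB' i⟩,
    det_eq_of_forall_row_eq_smul_add_const c i₀ (by simp [c]) fun _ _ => rfl, fun i => ?_⟩
  have hiS : i ∈ S ↔ a i = 0 ∧ 0 < b i := by simp [S]
  rw [hB', Fin.val_zero]
  simp only [a']
  split_ifs <;> simp_all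

theorem HasIntervalRows.det_mem_range_signType_cast :
    ∀ {p : ℕ} {B : Matrix (Fin p) (Fin p) R}, B.HasIntervalRows →
      B.det ∈ range (SignType.cast : SignType → R)
  | 0, B, _ => ⟨1, by simp⟩
  | p + 1, B, hB => by
    rcases hB.exists_col_zero_eq with hzero | ⟨B', i₀, hB', hdet, hcol⟩
    · exact ⟨0, by rw [det_eq_zero_of_column_eq_zero 0 hzero, SignType.coe_zero]⟩
    · rw [← hdet, det_eq_neg_one_pow_mul_det_of_col_zero_eq hcol,
        neg_one_pow_mul_mem_range_signType_cast_iff]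
      exact (hB'.submatrix_succ _).det_mem_range_signType_cast

theorem isTotallyUnimodular_of_hasConsecutiveOnes [LinearOrder n] {A : Matrix m n R}
    (h01 : A.IsZeroOne) (hA : A.HasConsecutiveOnes) : A.IsTotallyUnimodular := by
  intro p f g _ hg
  set σ := Tuple.sort g
  have hsorted : StrictMono (g ∘ σ) :=
    (Tuple.monotone_sort g).strictMono_of_injective (hg.comp σ.injective)
  rw [← det_submatrix_perm_mem_range_signType_cast_iff _ σ, submatrix_submatrix]
  exact ((hA.submatrix f hsorted).hasIntervalRows (h01.submatrix f _)).det_mem_range_signType_cast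

end CommRing

end Matrix

open Matrix

/-- Let `S` be a proper set of intervals (columns, sorted by right endpoint)
and `T ⊆ S` (rows). The 0-1 intersection matrix `M` with `M t s = 1` iff intervals `t`
and `s` intersect has the consecutive-ones property in each row, and is totally unimodular. -/
theorem proper_intervals_matrix_consecutive_ones_and_TU {k : ℕ} (l r : Fin k → ℝ)
    (hlr : ∀ i, l i ≤ r i)
    (proper : ∀ i j : Fin k, i ≠ j →
      ¬ (Set.Icc (l j) (r j) ⊆ Set.Icc (l i) (r i)))
    (hsorted : StrictMono r)
    (T : Finset (Fin k))
    (M : Matrix {t : Fin k // t ∈ T} (Fin k) ℚ)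
    (hM : ∀ t s, M t s =
      if (Set.Icc (l t.1) (r t.1) ∩ Set.Icc (l s) (r s)).Nonempty then 1 else 0) :
    (∀ t, ∀ s₁ s₂ s₃ : Fin k, s₁ < s₂ → s₂ < s₃ →
        M t s₁ = 1 → M t s₃ = 1 → M t s₂ = 1) ∧
    M.IsTotallyUnimodular := by
  have hl : Monotone l := monotone_left_of_not_Icc_subset hsorted.monotone proper
  have hM₁ : ∀ t s, M t s = 1 ↔ (Icc (l t.1) (r t.1) ∩ Icc (l s) (r s)).Nonempty := by
    intro t s
    simp [hM]
  have h01 : M.IsZeroOne := fun t s => by rw [hM]; split_ifs <;> simp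
  have hones : M.HasConsecutiveOnes := by
    intro t s₁ s₂ s₃ h₁₂ h₂₃ h₁ h₃
    rw [hM₁] at h₁ h₃ ⊢
    exact Icc_inter_Icc_nonempty_of_le_of_le hl hsorted.monotone hlr h₁₂.le h₂₃.le h₁ h₃
  exact ⟨hones, isTotallyUnimodular_of_hasConsecutiveOnes h01 hones⟩
end

section
/- Let S be a finite proper set of intervals on the real line (no interval contains another). Then there exists a finite set P of real numbers such that every interval in S contains exactly one point of P. -/
/-!
Let `r` be the smallest right endpoint in the family. It pierces every interval starting at or
before `r`; the intervals starting after `r` are pierced exactly once by induction, using only right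
endpoints. In a proper family an interval that starts later also ends later, so none of those right
endpoints lies in an interval starting at or before `r`.
-/

open Set

theorem existsUnique_mem_insert_of_mem {α : Type*} [DecidableEq α] {P : Finset α} {I : Set α}
    {r : α} (hr : r ∈ I) (hP : ∀ p ∈ P, p ∉ I) : ∃! p, p ∈ insert r P ∧ p ∈ I := by
  refine ⟨r, ⟨P.mem_insert_self r, hr⟩, ?_⟩
  rintro q ⟨hq, hqI⟩
  rcases Finset.mem_insert.1 hq with rfl | hqP
  · rfl
  · exact absurd hqI (hP q hqP)

theorem existsUnique_mem_insert_of_notMem {α : Type*} [DecidableEq α] {P : Finset α} {I : Set α}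
    {r : α} (hr : r ∉ I) (hP : ∃! p, p ∈ P ∧ p ∈ I) : ∃! p, p ∈ insert r P ∧ p ∈ I := by
  have h : ∀ p, p ∈ insert r P ∧ p ∈ I ↔ p ∈ P ∧ p ∈ I := fun p => by
    rw [Finset.mem_insert, or_and_right, or_iff_right]
    rintro ⟨rfl, hp⟩
    exact hr hp
  simpa only [h] using hP

section Piercing

variable {α : Type*} [LinearOrder α]

def IsProperIntervalFamily (S : Finset (α × α)) : Prop :=
  ∀ s ∈ S, ∀ t ∈ S, s ≠ t → ¬ Icc t.1 t.2 ⊆ Icc s.1 s.2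

theorem IsProperIntervalFamily.mono {S T : Finset (α × α)} (hS : IsProperIntervalFamily S)
    (hTS : T ⊆ S) : IsProperIntervalFamily T :=
  fun s hs t ht => hS s (hTS hs) t (hTS ht)

theorem IsProperIntervalFamily.snd_lt_snd_of_fst_lt {S : Finset (α × α)}
    (hS : IsProperIntervalFamily S) {s t : α × α} (hs : s ∈ S) (ht : t ∈ S) (hst : s.1 < t.1) :
    s.2 < t.2 := by
  by_contra! hts
  exact hS s hs t ht (fun h => hst.ne (congrArg Prod.fst h)) (Icc_subset_Icc hst.le hts)

theorem IsProperIntervalFamily.exists_exactPiercing_subset_image_snd {S : Finset (α × α)}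
    (hS : ∀ s ∈ S, s.1 ≤ s.2) (hproper : IsProperIntervalFamily S) :
    ∃ P ⊆ S.image Prod.snd, ∀ s ∈ S, ∃! p, p ∈ P ∧ p ∈ Icc s.1 s.2 := by
  induction S using Finset.strongInduction with
  | H S ih =>
    rcases S.eq_empty_or_nonempty with rfl | hne
    · exact ⟨∅, Finset.empty_subset _, by simp⟩
    obtain ⟨m, hm, hmin⟩ := S.exists_min_image Prod.snd hne
    set S' := S.filter (fun u => m.2 < u.1)
    have hS'S : S' ⊆ S := Finset.filter_subset _ _
    have hm' : m ∉ S' := fun h => (Finset.mem_filter.1 h).2.not_ge (hS m hm)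
    obtain ⟨P', hP'S', hP'⟩ := ih S' (Finset.ssubset_iff_of_subset hS'S |>.2 ⟨m, hm, hm'⟩)
      (fun s hs => hS s (hS'S hs)) (hproper.mono hS'S)
    refine ⟨insert m.2 P', Finset.insert_subset (Finset.mem_image_of_mem _ hm)
      (hP'S'.trans (Finset.image_subset_image hS'S)), fun s hs => ?_⟩
    by_cases hsm : s.1 ≤ m.2
    · refine existsUnique_mem_insert_of_mem ⟨hsm, hmin s hs⟩ fun p hp hps => ?_
      obtain ⟨u, hu, rfl⟩ := Finset.mem_image.1 (hP'S' hp)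
      have hsu : s.1 < u.1 := hsm.trans_lt (Finset.mem_filter.1 hu).2
      exact (hproper.snd_lt_snd_of_fst_lt hs (hS'S hu) hsu).not_ge hps.2
    · exact existsUnique_mem_insert_of_notMem (fun h => hsm h.1)
        (hP' s (Finset.mem_filter.2 ⟨hs, not_le.1 hsm⟩))

end Piercing

/-- A finite proper set of closed intervals (no interval contains another)
admits a finite set `P` of points such that every interval contains exactly one point of `P`. -/
theorem proper_intervals_exact_piercing (S : Finset (ℝ × ℝ))
    (hS : ∀ s ∈ S, s.1 ≤ s.2)
    (proper : ∀ s ∈ S, ∀ t ∈ S, s ≠ t → ¬ Set.Icc t.1 t.2 ⊆ Set.Icc s.1 s.2) :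
    ∃ P : Finset ℝ, ∀ s ∈ S, ∃! p : ℝ, p ∈ P ∧ p ∈ Set.Icc s.1 s.2 := by
  obtain ⟨P, -, hP⟩ := IsProperIntervalFamily.exists_exactPiercing_subset_image_snd hS proper
  exact ⟨P, hP⟩
end

section
/- For any positive integers h and w, the (h,w)-grid graph has a unit-B1-VPG representation: explicitly, with ε = 1/(hw), assigning to each vertex (x,y) the L-shaped path consisting of a vertical unit segment with top endpoint (x, y - ε(x-1)) and a horizontal unit segment extending rightward from the bottom endpoint of the vertical segment, yields a family of paths in which two paths intersect if and only if the corresponding grid vertices are equal or adjacent. -/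
/-!
Two unit L-paths with corners `p` and `q` meet iff `|p.1 - q.1| ≤ 1`, `|p.2 - q.2| ≤ 1` and
`(p.1 - q.1) * (p.2 - q.2) ≤ 0`. Up to a common translation, vertex `(x, y)` has its corner at
`(x, y - εx)`, so two vertices with integer differences `k = x₁ - x₂`, `d = y₁ - y₂` give the
displacement `(k, d - εk)`. For `k = ±1` the shift `εk`, of size in `(0, 1)`, leaves `d = 0`
as the only integer meeting the three conditions; without it the diagonal neighbour `d = -k`
would qualify as well.
-/

/-- Top `y`-coordinate of the vertical segment of the L-path assigned to grid
vertex `(x,y)`, with `ε = 1/(h·w)`: the top endpoint is `(x, y - ε(x-1))`. -/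
noncomputable def gridTop (h w x y : ℤ) : ℝ :=
  (y : ℝ) - (1 / ((h : ℝ) * (w : ℝ))) * ((x : ℝ) - 1)

/-- The unit L-path of grid vertex `(x,y)`: a vertical unit segment with top endpoint
`(x, y - ε(x-1))`, together with a horizontal unit segment extending rightward from
the bottom endpoint of the vertical segment. -/
noncomputable def gridL (h w x y : ℤ) : Set (ℝ × ℝ) :=
  {p | (p.1 = (x : ℝ) ∧ gridTop h w x y - 1 ≤ p.2 ∧ p.2 ≤ gridTop h w x y) ∨
       (p.2 = gridTop h w x y - 1 ∧ (x : ℝ) ≤ p.1 ∧ p.1 ≤ (x : ℝ) + 1)}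

open Set

def lPath (c : ℝ × ℝ) : Set (ℝ × ℝ) :=
  {c.1} ×ˢ Icc c.2 (c.2 + 1) ∪ Icc c.1 (c.1 + 1) ×ˢ {c.2}

theorem lPath_inter_nonempty_iff (p q : ℝ × ℝ) :
    (lPath p ∩ lPath q).Nonempty ↔
      |p.1 - q.1| ≤ 1 ∧ |p.2 - q.2| ≤ 1 ∧ (p.1 - q.1) * (p.2 - q.2) ≤ 0 := by
  simp only [abs_le, mul_nonpos_iff, sub_nonneg, sub_nonpos]
  constructor
  · rintro ⟨r, hp, hq⟩
    simp only [lPath, mem_union, mem_prod, mem_singleton_iff, mem_Icc] at hp hq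
    rcases hp with ⟨hp₁, hp₂, hp₃⟩ | ⟨⟨hp₁, hp₂⟩, hp₃⟩ <;>
      rcases hq with ⟨hq₁, hq₂, hq₃⟩ | ⟨⟨hq₁, hq₂⟩, hq₃⟩ <;>
      refine ⟨⟨by linarith, by linarith⟩, ⟨by linarith, by linarith⟩, ?_⟩
    · have e : p.1 = q.1 := hp₁.symm.trans hq₁
      exact (le_total p.2 q.2).imp (fun h => ⟨e.ge, h⟩) (fun h => ⟨e.le, h⟩)
    · exact .inl ⟨by linarith, by linarith⟩
    · exact .inr ⟨by linarith, by linarith⟩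
    · have e : p.2 = q.2 := hp₃.symm.trans hq₃
      exact (le_total q.1 p.1).imp (fun h => ⟨h, e.le⟩) (fun h => ⟨h, e.ge⟩)
  · rintro ⟨⟨hx₁, hx₂⟩, ⟨hy₁, hy₂⟩, ⟨hx, hy⟩ | ⟨hx, hy⟩⟩
    · refine ⟨(p.1, q.2), .inl ⟨rfl, ?_⟩, .inr ⟨?_, rfl⟩⟩ <;> constructor <;> simp only <;> linarith
    · refine ⟨(q.1, p.2), .inr ⟨?_, rfl⟩, .inl ⟨rfl, ?_⟩⟩ <;> constructor <;> simp only <;> linarith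

theorem tilted_int_displacement_iff {ε : ℝ} (hε : 0 < ε) {k d : ℤ} (hk : ε * |(k : ℝ)| < 1) :
    (|(k : ℝ)| ≤ 1 ∧ |d - ε * k| ≤ 1 ∧ k * (d - ε * k) ≤ 0) ↔
      (k = 0 ∧ d = 0) ∨ |k| + |d| = 1 := by
  constructor
  · rintro ⟨hk₁, hd₁, hprod⟩
    obtain rfl | rfl | rfl := Int.abs_le_one_iff.mp (by exact_mod_cast hk₁)
    · norm_num at hd₁ ⊢
      rcases Int.abs_le_one_iff.mp (by exact_mod_cast hd₁) with rfl | rfl | rfl <;> simp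
    all_goals
      norm_num at hk hd₁ hprod
      rw [abs_le] at hd₁
      obtain rfl : d = 0 := Int.abs_lt_one_iff.mp <| by
        have : |(d : ℝ)| < 1 := abs_lt.mpr ⟨by linarith, by linarith⟩
        exact_mod_cast this
      simp
  · rintro (⟨rfl, rfl⟩ | h)
    · simp
    · obtain ⟨rfl, rfl | rfl⟩ | ⟨rfl | rfl, rfl⟩ :
          k = 0 ∧ (d = 1 ∨ d = -1) ∨ (k = 1 ∨ k = -1) ∧ d = 0 := by
        rw [Int.abs_eq_natAbs, Int.abs_eq_natAbs] at h
        omega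
      all_goals norm_num [abs_of_pos hε] at hk ⊢
      all_goals exact ⟨hk.le, hε.le⟩

theorem lPath_tilted_inter_nonempty_iff {ε : ℝ} (hε : 0 < ε) (c : ℝ) {x₁ y₁ x₂ y₂ : ℤ}
    (hspread : ε * |(x₁ : ℝ) - x₂| < 1) :
    (lPath (x₁, y₁ - ε * x₁ + c) ∩ lPath (x₂, y₂ - ε * x₂ + c)).Nonempty ↔
      (x₁ = x₂ ∧ y₁ = y₂) ∨ |x₁ - x₂| + |y₁ - y₂| = 1 := by
  have key := tilted_int_displacement_iff hε (k := x₁ - x₂) (d := y₁ - y₂)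
    (by push_cast; exact hspread)
  rw [sub_eq_zero, sub_eq_zero] at key
  have hdiff : (y₁ - ε * x₁ + c) - (y₂ - ε * x₂ + c) = (y₁ - y₂) - ε * (x₁ - x₂) := by ring
  rw [lPath_inter_nonempty_iff, ← key, hdiff]
  push_cast
  rfl

theorem gridL_eq_lPath (h w x y : ℤ) : gridL h w x y = lPath (x, gridTop h w x y - 1) := by
  ext p
  simp only [gridL, lPath, mem_union, mem_prod, mem_singleton_iff, mem_Icc, mem_ofPred_eq,
    sub_add_cancel]
  exact or_congr_right and_comm

theorem grid_unit_B1_VPG_representation_general (h w : ℤ) (hw : 0 < w)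
    (x₁ y₁ x₂ y₂ : ℤ)
    (hx₁ : 1 ≤ x₁ ∧ x₁ ≤ h) (hx₂ : 1 ≤ x₂ ∧ x₂ ≤ h) :
    (gridL h w x₁ y₁ ∩ gridL h w x₂ y₂).Nonempty ↔
      ((x₁ = x₂ ∧ y₁ = y₂) ∨ |x₁ - x₂| + |y₁ - y₂| = 1) := by
  have hh : 0 < h := by omega
  set ε : ℝ := 1 / ((h : ℝ) * w) with hε
  have hcorner (x y : ℤ) : gridTop h w x y - 1 = y - ε * x + (ε - 1) := by
    rw [gridTop]; ring
  have hspread : ε * |(x₁ : ℝ) - x₂| < 1 := by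
    have : |x₁ - x₂| < h * w := by
      rw [abs_sub_lt_iff]; constructor <;> nlinarith
    rw [hε, one_div_mul_eq_div, div_lt_one (by positivity)]
    exact_mod_cast this
  rw [gridL_eq_lPath, gridL_eq_lPath, hcorner, hcorner]
  exact lPath_tilted_inter_nonempty_iff (by positivity) _ hspread

/-- for positive `h, w`, the family `{gridL h w x y}` over grid vertices
is a unit-B₁-VPG representation of the (h,w)-grid: two L-paths intersect iff the
corresponding grid vertices are equal or adjacent in the grid. -/
theorem grid_unit_B1_VPG_representation (h w : ℤ) (hh : 0 < h) (hw : 0 < w)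
    (x₁ y₁ x₂ y₂ : ℤ)
    (hx₁ : 1 ≤ x₁ ∧ x₁ ≤ h) (hy₁ : 1 ≤ y₁ ∧ y₁ ≤ w)
    (hx₂ : 1 ≤ x₂ ∧ x₂ ≤ h) (hy₂ : 1 ≤ y₂ ∧ y₂ ≤ w) :
    (gridL h w x₁ y₁ ∩ gridL h w x₂ y₂).Nonempty ↔
      ((x₁ = x₂ ∧ y₁ = y₂) ∨ |x₁ - x₂| + |y₁ - y₂| = 1) :=
  grid_unit_B1_VPG_representation_general h w hw x₁ y₁ x₂ y₂ hx₁ hx₂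
end

section
/- Let R be a finite set of pairwise-disjoint leftward-directed horizontal rays and V a finite set of pairwise-disjoint vertical segments, each intersecting at least one ray of R. In the SSR token-passing algorithm (MOD-SSR), for any ray r ∈ R and any iteration k ≥ 1: if a segment v ∈ V_k intersects r in the input, then v intersects some ray r' ∈ R_k whose token T_{r'} contains r. -/
/-!
A label `r` is carried along by a surviving ray `r'` hitting `v`. While `v` survives, `r'` is not
a solution ray; if `r'` is not the pivot its token is untouched, and if it is the pivot then `v`
hits another surviving ray (otherwise the pivot would have been critical). Since the pivot has the
smallest right endpoint, every surviving ray whose height lies between those of two rays hitting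
`v` also hits `v`; in particular so does the pivot's neighbour on the side of that other ray, and
the neighbour receives `r`.
-/

attribute [local instance] Classical.propDecidable

/-- A leftward-directed horizontal ray, given by its right endpoint `(x, y)`:
the point set `{(x', y) : x' ≤ x}`. -/
structure Ray where
  x : ℝ
  y : ℝ

/-- A vertical segment with `x`-coordinate `x` and `y`-range `[lo, hi]`. -/
structure VSeg where
  x : ℝ
  lo : ℝ
  hi : ℝ

/-- A leftward-directed ray intersects a vertical segment iff the segment's
`x`-coordinate is at most the ray's right endpoint and the ray's height lies
in the segment's `y`-range. -/
def hits (r : Ray) (v : VSeg) : Prop :=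
  v.x ≤ r.x ∧ v.lo ≤ r.y ∧ r.y ≤ v.hi

/-- A ray `r` of the surviving set `Rset` is critical if some surviving segment
intersects `r` and no other surviving ray. -/
def critical (Rset : Finset Ray) (Vset : Finset VSeg) (r : Ray) : Prop :=
  r ∈ Rset ∧ ∃ v ∈ Vset, hits r v ∧ ∀ r' ∈ Rset, hits r' v → r' = r

/-- `r'` lies just above `r` within the set `D` of rays. -/
def justAbove (D : Finset Ray) (r r' : Ray) : Prop :=
  r ∈ D ∧ r' ∈ D ∧ r.y < r'.y ∧ ∀ r'' ∈ D, ¬ (r.y < r''.y ∧ r''.y < r'.y)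

/-- An execution trace of the MOD-SSR token-passing algorithm on the SSR instance
`(R, V)`.  `Rs i, Vs i, Ss i, Tok i` are the surviving rays, surviving segments,
heuristic solution and tokens at the end of iteration `i`; `pivot i` is the ray
with smallest right-endpoint `x`-coordinate that passes its token in iteration `i`. -/
structure ModSSRTrace (R : Finset Ray) (V : Finset VSeg) where
  steps : ℕ
  Rs : ℕ → Finset Ray
  Vs : ℕ → Finset VSeg
  Ss : ℕ → Finset Ray
  Tok : ℕ → Ray → Finset Ray
  pivot : ℕ → Ray
  init_R : Rs 0 = R
  init_V : Vs 0 = V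
  init_S : Ss 0 = ∅
  init_T : ∀ r, Tok 0 r = {r}
  running : ∀ i < steps, Vs i ≠ ∅
  /-- step (a): collect all rays critical after the previous iteration. -/
  S_step : ∀ i, 1 ≤ i → i ≤ steps →
    Ss i = Ss (i-1) ∪ (Rs (i-1)).filter (fun r => critical (Rs (i-1)) (Vs (i-1)) r)
  /-- step (b): delete all segments intersecting some solution ray. -/
  V_step : ∀ i, 1 ≤ i → i ≤ steps →
    Vs i = (Vs (i-1)).filter (fun v => ∀ r ∈ Ss i, ¬ hits r v)
  /-- step (c): the pivot is a surviving non-solution ray of smallest right-endpoint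
  `x`-coordinate. -/
  pivot_mem : ∀ i, 1 ≤ i → i ≤ steps → pivot i ∈ Rs (i-1) \ Ss i
  pivot_min : ∀ i, 1 ≤ i → i ≤ steps → ∀ r ∈ Rs (i-1) \ Ss i, (pivot i).x ≤ r.x
  /-- token passing: each label `x` in the pivot's token migrates to a neighbour
  (just above / just below in `Rs (i-1) \ Ss i`) whenever some surviving segment
  intersects `x`, the pivot and that neighbour; then the pivot's token is emptied. -/
  Tok_step : ∀ i, 1 ≤ i → i ≤ steps → ∀ r' : Ray,
    Tok i r' =
      if r' = pivot i then ∅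
      else if justAbove (Rs (i-1) \ Ss i) (pivot i) r'
              ∨ justAbove (Rs (i-1) \ Ss i) r' (pivot i) then
        Tok (i-1) r' ∪ (Tok (i-1) (pivot i)).filter
          (fun x => ∃ v ∈ Vs i, hits x v ∧ hits (pivot i) v ∧ hits r' v)
      else Tok (i-1) r'
  /-- deletion of the pivot and the solution rays. -/
  R_step : ∀ i, 1 ≤ i → i ≤ steps →
    Rs i = (Rs (i-1) \ Ss i).erase (pivot i)
  /-- termination: no segment is left. -/
  term : Vs steps = ∅

theorem justAbove.ne {D : Finset Ray} {r r' : Ray} (h : justAbove D r r') : r ≠ r' :=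
  fun hrr' => (hrr' ▸ h.2.2.1).false

theorem exists_justAbove_le {D : Finset Ray} {p s : Ray} (hp : p ∈ D) (hs : s ∈ D)
    (hps : p.y < s.y) : ∃ q, justAbove D p q ∧ q.y ≤ s.y := by
  obtain ⟨q, hq, hq_min⟩ := (D.filter (fun u => p.y < u.y)).exists_min_image (·.y)
    ⟨s, Finset.mem_filter.mpr ⟨hs, hps⟩⟩
  obtain ⟨hqD, hpq⟩ := Finset.mem_filter.mp hq
  refine ⟨q, ⟨hp, hqD, hpq, fun u hu ⟨hpu, huq⟩ => ?_⟩,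
    hq_min s (Finset.mem_filter.mpr ⟨hs, hps⟩)⟩
  exact (hq_min u (Finset.mem_filter.mpr ⟨hu, hpu⟩)).not_gt huq

theorem exists_justAbove_ge {D : Finset Ray} {p s : Ray} (hp : p ∈ D) (hs : s ∈ D)
    (hsp : s.y < p.y) : ∃ q, justAbove D q p ∧ s.y ≤ q.y := by
  obtain ⟨q, hq, hq_max⟩ := (D.filter (fun u => u.y < p.y)).exists_max_image (·.y)
    ⟨s, Finset.mem_filter.mpr ⟨hs, hsp⟩⟩
  obtain ⟨hqD, hqp⟩ := Finset.mem_filter.mp hq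
  refine ⟨q, ⟨hqD, hp, hqp, fun u hu ⟨hqu, hup⟩ => ?_⟩,
    hq_max s (Finset.mem_filter.mpr ⟨hs, hsp⟩)⟩
  exact (hq_max u (Finset.mem_filter.mpr ⟨hu, hup⟩)).not_gt hqu

theorem exists_neighbour_hits {D : Finset Ray} {p s : Ray} {v : VSeg} (hp : p ∈ D)
    (hp_min : ∀ q ∈ D, p.x ≤ q.x) (hpv : hits p v) (hs : s ∈ D) (hsv : hits s v)
    (hsp : s.y ≠ p.y) : ∃ q ∈ D, (justAbove D p q ∨ justAbove D q p) ∧ hits q v := by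
  rcases hsp.lt_or_gt with hlt | hgt
  · obtain ⟨q, hqp, hsq⟩ := exists_justAbove_ge hp hs hlt
    exact ⟨q, hqp.1, Or.inr hqp, hpv.1.trans (hp_min q hqp.1),
      hsv.2.1.trans hsq, hqp.2.2.1.le.trans hpv.2.2⟩
  · obtain ⟨q, hpq, hqs⟩ := exists_justAbove_le hp hs hgt
    exact ⟨q, hpq.2.1, Or.inl hpq, hpv.1.trans (hp_min q hpq.2.1),
      hpv.2.1.trans hpq.2.2.1.le, hqs.trans hsv.2.2⟩

namespace ModSSRTrace

variable {R : Finset Ray} {V : Finset VSeg} (t : ModSSRTrace R V)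

theorem Rs_subset {i : ℕ} (hi : i ≤ t.steps) : t.Rs i ⊆ R := by
  induction i with
  | zero => exact t.init_R.subset
  | succ i ih =>
    intro q hq
    rw [t.R_step (i + 1) (by omega) hi] at hq
    exact ih (by omega) (Finset.mem_sdiff.mp (Finset.mem_of_mem_erase hq)).1

theorem Vs_succ_subset {i : ℕ} (hi : i + 1 ≤ t.steps) : t.Vs (i + 1) ⊆ t.Vs i := by
  rw [t.V_step (i + 1) (by omega) hi]
  exact Finset.filter_subset _ _

theorem notMem_Ss_of_hits {i : ℕ} (hi : 1 ≤ i) (hi' : i ≤ t.steps) {v : VSeg}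
    (hv : v ∈ t.Vs i) {q : Ray} (hqv : hits q v) : q ∉ t.Ss i := by
  rw [t.V_step i hi hi', Finset.mem_filter] at hv
  exact fun hq => hv.2 q hq hqv

theorem exists_ne_pivot_hits {i : ℕ} (hi : i + 1 ≤ t.steps) {v : VSeg} (hv : v ∈ t.Vs (i + 1))
    (hpv : hits (t.pivot (i + 1)) v) : ∃ s ∈ t.Rs i, hits s v ∧ s ≠ t.pivot (i + 1) := by
  have hpD : t.pivot (i + 1) ∈ t.Rs i \ t.Ss (i + 1) := t.pivot_mem (i + 1) (by omega) hi
  have hvi : v ∈ t.Vs i := t.Vs_succ_subset hi hv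
  by_contra! hunique
  have hcrit : critical (t.Rs i) (t.Vs i) (t.pivot (i + 1)) :=
    ⟨(Finset.mem_sdiff.mp hpD).1, v, hvi, hpv, hunique⟩
  refine (Finset.mem_sdiff.mp hpD).2 ?_
  rw [t.S_step (i + 1) (by omega) hi]
  exact Finset.mem_union_right _ (Finset.mem_filter.mpr ⟨(Finset.mem_sdiff.mp hpD).1, hcrit⟩)

theorem token_step (hRdisj : ∀ r ∈ R, ∀ r' ∈ R, r ≠ r' → r.y ≠ r'.y) {i : ℕ}
    (hi : i + 1 ≤ t.steps) {r r' : Ray} {v : VSeg} (hv : v ∈ t.Vs (i + 1)) (hrv : hits r v)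
    (hr' : r' ∈ t.Rs i) (hr'v : hits r' v) (hrT : r ∈ t.Tok i r') :
    ∃ r'' ∈ t.Rs (i + 1), hits r'' v ∧ r ∈ t.Tok (i + 1) r'' := by
  have hRs := t.R_step (i + 1) (by omega) hi
  have hTok := t.Tok_step (i + 1) (by omega) hi
  simp only [Nat.add_sub_cancel] at hRs hTok
  set p := t.pivot (i + 1)
  set D := t.Rs i \ t.Ss (i + 1)
  have hr'D : r' ∈ D :=
    Finset.mem_sdiff.mpr ⟨hr', t.notMem_Ss_of_hits (by omega) hi hv hr'v⟩
  by_cases hr'p : r' = p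
  · subst hr'p
    obtain ⟨s, hs, hsv, hsp⟩ := t.exists_ne_pivot_hits hi hv hr'v
    have hsD : s ∈ D := Finset.mem_sdiff.mpr ⟨hs, t.notMem_Ss_of_hits (by omega) hi hv hsv⟩
    have hsy : s.y ≠ p.y :=
      hRdisj s (t.Rs_subset (by omega) hs) p (t.Rs_subset (by omega) hr') hsp
    obtain ⟨q, hqD, hnb, hqv⟩ := exists_neighbour_hits hr'D
      (t.pivot_min (i + 1) (by omega) hi) hr'v hsD hsv hsy
    have hqp : q ≠ p := hnb.elim (fun h => h.ne.symm) (fun h => h.ne)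
    refine ⟨q, hRs ▸ Finset.mem_erase.mpr ⟨hqp, hqD⟩, hqv, ?_⟩
    rw [hTok q, if_neg hqp, if_pos hnb]
    exact Finset.mem_union_right _ (Finset.mem_filter.mpr ⟨hrT, v, hv, hrv, hr'v, hqv⟩)
  · refine ⟨r', hRs ▸ Finset.mem_erase.mpr ⟨hr'p, hr'D⟩, hr'v, ?_⟩
    rw [hTok r', if_neg hr'p]
    split_ifs
    · exact Finset.mem_union_left _ hrT
    · exact hrT

end ModSSRTrace

theorem modSSR_token_invariant_general (R : Finset Ray) (V : Finset VSeg)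
    (hRdisj : ∀ r ∈ R, ∀ r' ∈ R, r ≠ r' → r.y ≠ r'.y)
    (t : ModSSRTrace R V)
    (r : Ray) (hr : r ∈ R) (k : ℕ) (hk : k ≤ t.steps)
    (v : VSeg) (hv : v ∈ t.Vs k) (hrv : hits r v) :
    ∃ r' ∈ t.Rs k, hits r' v ∧ r ∈ t.Tok k r' := by
  induction k generalizing v with
  | zero => exact ⟨r, by rwa [t.init_R], hrv, by simp [t.init_T]⟩
  | succ i ih =>
    obtain ⟨r', hr', hr'v, hrT⟩ := ih (by omega) v (t.Vs_succ_subset hk hv) hrv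
    exact t.token_step hRdisj hk hv hrv hr' hr'v hrT

/-- Observation 1: in any execution of MOD-SSR, for any input ray `r`
and iteration `k ≥ 1`, if a surviving segment `v ∈ V_k` intersects `r` in the input,
then `v` intersects some surviving ray `r' ∈ R_k` whose token contains `r`. -/
theorem modSSR_token_invariant (R : Finset Ray) (V : Finset VSeg)
    (hVok : ∀ v ∈ V, v.lo ≤ v.hi)
    (hRdisj : ∀ r ∈ R, ∀ r' ∈ R, r ≠ r' → r.y ≠ r'.y)
    (hVdisj : ∀ v ∈ V, ∀ w ∈ V, v ≠ w → v.x ≠ w.x)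
    (hfeas : ∀ v ∈ V, ∃ r ∈ R, hits r v)
    (t : ModSSRTrace R V)
    (r : Ray) (hr : r ∈ R) (k : ℕ) (hk1 : 1 ≤ k) (hk : k ≤ t.steps)
    (v : VSeg) (hv : v ∈ t.Vs k) (hrv : hits r v) :
    ∃ r' ∈ t.Rs k, hits r' v ∧ r ∈ t.Tok k r' :=
  modSSR_token_invariant_general R V hRdisj t r hr k hk v hv hrv
end

section
/- Let Q be the integer program of the SRS problem (minimize Σ_{w∈V} x_w subject to Σ_{w∈N(u)} x_w ≥ 1 for all rays u ∈ R, x ∈ {0,1}) and Q_l its LP relaxation. Then the KMN algorithm returns a feasible set S with |S| ≤ 2·OPT(Q_l); in particular OPT(Q) ≤ 2·OPT(Q_l). -/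
attribute [local instance] Classical.propDecidable

/-- An execution trace of the KMN algorithm for the SRS problem on `(R, V)`
(select a minimum subset of the vertical segments `V` stabbing all rays of `R`).
In iteration `i`, `riv i` is the surviving ray of smallest right-endpoint
`x`-coordinate, `N_i` is the set of surviving segments intersecting it, and
`vtop i` / `vbot i` are the segments of `N_i` with topmost top endpoint and
bottommost bottom endpoint; both join the solution and get the token `N_i`;
all rays hit by them and all segments of `N_i` are then deleted. -/
structure KMNTrace (R : Finset Ray) (V : Finset VSeg) where
  steps : ℕ
  Rs : ℕ → Finset Ray
  Vs : ℕ → Finset VSeg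
  Sol : ℕ → Finset VSeg
  Tok : ℕ → VSeg → Finset VSeg
  riv : ℕ → Ray
  vtop : ℕ → VSeg
  vbot : ℕ → VSeg
  init_R : Rs 0 = R
  init_V : Vs 0 = V
  init_S : Sol 0 = ∅
  init_T : ∀ v, Tok 0 v = ∅
  running : ∀ i < steps, Rs i ≠ ∅
  riv_mem : ∀ i, 1 ≤ i → i ≤ steps → riv i ∈ Rs (i-1)
  riv_min : ∀ i, 1 ≤ i → i ≤ steps → ∀ r ∈ Rs (i-1), (riv i).x ≤ r.x
  vtop_mem : ∀ i, 1 ≤ i → i ≤ steps →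
    vtop i ∈ (Vs (i-1)).filter (fun v => hits (riv i) v)
  vtop_top : ∀ i, 1 ≤ i → i ≤ steps →
    ∀ v ∈ (Vs (i-1)).filter (fun v => hits (riv i) v), v.hi ≤ (vtop i).hi
  vbot_mem : ∀ i, 1 ≤ i → i ≤ steps →
    vbot i ∈ (Vs (i-1)).filter (fun v => hits (riv i) v)
  vbot_bot : ∀ i, 1 ≤ i → i ≤ steps →
    ∀ v ∈ (Vs (i-1)).filter (fun v => hits (riv i) v), (vbot i).lo ≤ v.lo
  Sol_step : ∀ i, 1 ≤ i → i ≤ steps →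
    Sol i = Sol (i-1) ∪ {vtop i, vbot i}
  Tok_step : ∀ i, 1 ≤ i → i ≤ steps → ∀ v : VSeg,
    Tok i v = if v = vtop i ∨ v = vbot i
      then (Vs (i-1)).filter (fun w => hits (riv i) w)
      else Tok (i-1) v
  R_step : ∀ i, 1 ≤ i → i ≤ steps →
    Rs i = (Rs (i-1)).filter (fun r => ¬ hits r (vtop i) ∧ ¬ hits r (vbot i))
  V_step : ∀ i, 1 ≤ i → i ≤ steps →
    Vs i = Vs (i-1) \ (Vs (i-1)).filter (fun v => hits (riv i) v)
  term : Rs steps = ∅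

/-!
Each step adds at most two segments to `S` and deletes the set `N` of surviving segments meeting
its ray `r`, so these sets are pairwise disjoint. No segment of `V` meeting `r` was deleted
earlier: it would have met the ray `r'` of that earlier step, and since `r` lies to the right of
`r'`, the topmost or bottommost segment chosen for `r'` would have covered `r`. Hence `N` is all
of `N(r)`, which carries LP weight at least `1`, and `|S| ≤ 2 · #steps ≤ 2 · ∑ x`.
-/

lemma hits_top_or_hits_bot {r₀ r : Ray} {top bot w : VSeg} (htop : hits r₀ top)
    (hbot : hits r₀ bot) (hhi : w.hi ≤ top.hi) (hlo : bot.lo ≤ w.lo) (hx : r₀.x ≤ r.x)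
    (hw : hits r w) : hits r top ∨ hits r bot := by
  rcases le_total r.y r₀.y with hy | hy
  · exact Or.inr ⟨hbot.1.trans hx, hlo.trans hw.2.1, hy.trans hbot.2.2⟩
  · exact Or.inl ⟨htop.1.trans hx, htop.2.1.trans hy, hw.2.2.trans hhi⟩

namespace KMNTrace

variable {R : Finset Ray} {V : Finset VSeg} (t : KMNTrace R V) {k : ℕ}

/-- The set `N(r)` of step `k + 1`, where `r = t.riv (k + 1)`: the segments that step removes. -/
noncomputable def nbhd (k : ℕ) : Finset VSeg :=
  (t.Vs k).filter (fun v => hits (t.riv (k + 1)) v)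

lemma Vs_succ (hk : k < t.steps) : t.Vs (k + 1) = t.Vs k \ t.nbhd k :=
  t.V_step (k + 1) (by omega) hk

lemma Rs_succ (hk : k < t.steps) :
    t.Rs (k + 1) =
      (t.Rs k).filter (fun r => ¬ hits r (t.vtop (k + 1)) ∧ ¬ hits r (t.vbot (k + 1))) :=
  t.R_step (k + 1) (by omega) hk

lemma Sol_succ (hk : k < t.steps) : t.Sol (k + 1) = t.Sol k ∪ {t.vtop (k + 1), t.vbot (k + 1)} :=
  t.Sol_step (k + 1) (by omega) hk

lemma riv_mem_Rs (hk : k < t.steps) : t.riv (k + 1) ∈ t.Rs k :=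
  t.riv_mem (k + 1) (by omega) hk

lemma Vs_antitoneOn : AntitoneOn t.Vs (Set.Iic t.steps) :=
  antitoneOn_of_succ_le Set.ordConnected_Iic fun k _ _ hk => by
    rw [Order.succ_eq_add_one, Set.mem_Iic] at hk
    rw [Order.succ_eq_add_one, t.Vs_succ hk]
    exact Finset.sdiff_subset

lemma Rs_antitoneOn : AntitoneOn t.Rs (Set.Iic t.steps) :=
  antitoneOn_of_succ_le Set.ordConnected_Iic fun k _ _ hk => by
    rw [Order.succ_eq_add_one, Set.mem_Iic] at hk
    rw [Order.succ_eq_add_one, t.Rs_succ hk]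
    exact Finset.filter_subset _ _

lemma nbhd_subset_V (hk : k ≤ t.steps) : t.nbhd k ⊆ V := by
  have := t.Vs_antitoneOn (Set.mem_Iic.2 (Nat.zero_le _)) (Set.mem_Iic.2 hk) (Nat.zero_le k)
  rw [t.init_V] at this
  exact (Finset.filter_subset _ _).trans this

lemma riv_mem_R (hk : k < t.steps) : t.riv (k + 1) ∈ R := by
  have := t.Rs_antitoneOn (Set.mem_Iic.2 (Nat.zero_le _)) (Set.mem_Iic.2 hk.le) (Nat.zero_le k)
  rw [t.init_R] at this
  exact this (t.riv_mem_Rs hk)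

lemma hits_vtop_or_hits_vbot (hk : k < t.steps) {w : VSeg} (hw : w ∈ t.nbhd k) {r : Ray}
    (hx : (t.riv (k + 1)).x ≤ r.x) (hr : hits r w) :
    hits r (t.vtop (k + 1)) ∨ hits r (t.vbot (k + 1)) :=
  hits_top_or_hits_bot (Finset.mem_filter.1 (t.vtop_mem (k + 1) (by omega) hk)).2
    (Finset.mem_filter.1 (t.vbot_mem (k + 1) (by omega) hk)).2
    (t.vtop_top (k + 1) (by omega) hk w hw) (t.vbot_bot (k + 1) (by omega) hk w hw) hx hr

lemma filter_hits_riv_subset_nbhd (hk : k < t.steps) :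
    V.filter (fun v => hits (t.riv (k + 1)) v) ⊆ t.nbhd k := by
  suffices h : ∀ j ≤ k, V.filter (fun v => hits (t.riv (k + 1)) v) ⊆ t.Vs j by
    intro w hw
    exact Finset.mem_filter.2 ⟨h k le_rfl hw, (Finset.mem_filter.1 hw).2⟩
  intro j
  induction j with
  | zero => intro _; rw [t.init_V]; exact Finset.filter_subset _ _
  | succ j ih =>
    intro hj w hw
    have hwj := ih (by omega) hw
    rw [t.Vs_succ (by omega), Finset.mem_sdiff]
    refine ⟨hwj, fun hw_nbhd => ?_⟩
    have hr : t.riv (k + 1) ∈ t.Rs (j + 1) :=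
      t.Rs_antitoneOn (Set.mem_Iic.2 (by omega)) (Set.mem_Iic.2 hk.le) hj (t.riv_mem_Rs hk)
    have hx : (t.riv (j + 1)).x ≤ (t.riv (k + 1)).x :=
      t.riv_min (j + 1) (by omega) (by omega) _
        (t.Rs_antitoneOn (Set.mem_Iic.2 (by omega)) (Set.mem_Iic.2 hk.le) (by omega)
          (t.riv_mem_Rs hk))
    rw [t.Rs_succ (by omega), Finset.mem_filter] at hr
    rcases t.hits_vtop_or_hits_vbot (by omega) hw_nbhd hx (Finset.mem_filter.1 hw).2 with h | h
    · exact hr.2.1 h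
    · exact hr.2.2 h

lemma one_le_sum_nbhd {x : VSeg → ℝ} (hx0 : ∀ v, 0 ≤ x v)
    (hxfeas : ∀ r ∈ R, 1 ≤ ∑ v ∈ V.filter (fun v => hits r v), x v) (hk : k < t.steps) :
    1 ≤ ∑ v ∈ t.nbhd k, x v :=
  (hxfeas _ (t.riv_mem_R hk)).trans <|
    Finset.sum_le_sum_of_subset_of_nonneg (t.filter_hits_riv_subset_nbhd hk) fun v _ _ => hx0 v

lemma disjoint_nbhd {i j : ℕ} (hij : i < j) (hj : j ≤ t.steps) :
    Disjoint (t.nbhd i) (t.nbhd j) := by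
  have hVs : t.Vs j ⊆ t.Vs i \ t.nbhd i := by
    rw [← t.Vs_succ (by omega)]
    exact t.Vs_antitoneOn (Set.mem_Iic.2 (by omega)) (Set.mem_Iic.2 hj) hij
  exact Finset.disjoint_of_subset_right ((Finset.filter_subset _ _).trans hVs)
    Finset.disjoint_sdiff

lemma pairwiseDisjoint_nbhd : (↑(Finset.range t.steps) : Set ℕ).PairwiseDisjoint t.nbhd := by
  intro i hi j hj hij
  simp only [Finset.coe_range, Set.mem_Iio] at hi hj
  rcases hij.lt_or_gt with h | h
  · exact t.disjoint_nbhd h hj.le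
  · exact (t.disjoint_nbhd h hi.le).symm

lemma steps_le_sum {x : VSeg → ℝ} (hx0 : ∀ v, 0 ≤ x v)
    (hxfeas : ∀ r ∈ R, 1 ≤ ∑ v ∈ V.filter (fun v => hits r v), x v) :
    (t.steps : ℝ) ≤ ∑ v ∈ V, x v := by
  have hU : (Finset.range t.steps).biUnion t.nbhd ⊆ V :=
    Finset.biUnion_subset.2 fun k hk => t.nbhd_subset_V (Finset.mem_range.1 hk).le
  calc (t.steps : ℝ) = ∑ _k ∈ Finset.range t.steps, (1 : ℝ) := by simp
    _ ≤ ∑ k ∈ Finset.range t.steps, ∑ v ∈ t.nbhd k, x v :=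
        Finset.sum_le_sum fun k hk => t.one_le_sum_nbhd hx0 hxfeas (Finset.mem_range.1 hk)
    _ = ∑ v ∈ (Finset.range t.steps).biUnion t.nbhd, x v :=
        (Finset.sum_biUnion t.pairwiseDisjoint_nbhd).symm
    _ ≤ ∑ v ∈ V, x v := Finset.sum_le_sum_of_subset_of_nonneg hU fun v _ _ => hx0 v

lemma card_Sol_le (hk : k ≤ t.steps) : (t.Sol k).card ≤ 2 * k := by
  induction k with
  | zero => simp [t.init_S]
  | succ k ih =>
    rw [t.Sol_succ hk]
    have := (t.Sol k).card_union_le {t.vtop (k + 1), t.vbot (k + 1)}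
    have := Finset.card_le_two (a := t.vtop (k + 1)) (b := t.vbot (k + 1))
    have := ih (by omega)
    omega

lemma mem_Rs_or_exists_mem_Sol_hits (hk : k ≤ t.steps) {r : Ray} (hr : r ∈ R) :
    r ∈ t.Rs k ∨ ∃ v ∈ t.Sol k, hits r v := by
  induction k with
  | zero => exact Or.inl (by rwa [t.init_R])
  | succ k ih =>
    rw [t.Rs_succ hk, Finset.mem_filter, t.Sol_succ hk]
    rcases ih (by omega) with h | ⟨v, hv, hrv⟩
    · by_cases htop : hits r (t.vtop (k + 1))
      · exact Or.inr ⟨_, by simp, htop⟩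
      by_cases hbot : hits r (t.vbot (k + 1))
      · exact Or.inr ⟨_, by simp, hbot⟩
      exact Or.inl ⟨h, htop, hbot⟩
    · exact Or.inr ⟨v, Finset.mem_union_left _ hv, hrv⟩

lemma exists_mem_Sol_hits {r : Ray} (hr : r ∈ R) : ∃ v ∈ t.Sol t.steps, hits r v :=
  (t.mem_Rs_or_exists_mem_Sol_hits le_rfl hr).resolve_left (by simp [t.term])

end KMNTrace

theorem KMN_two_approx_of_LP_general (R : Finset Ray) (V : Finset VSeg)
    (t : KMNTrace R V)
    (x : VSeg → ℝ)
    (hx01 : ∀ v, 0 ≤ x v ∧ x v ≤ 1)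
    (hxfeas : ∀ r ∈ R, 1 ≤ ∑ v ∈ V.filter (fun v => hits r v), x v) :
    (∀ r ∈ R, ∃ v ∈ t.Sol t.steps, hits r v) ∧
    ((t.Sol t.steps).card : ℝ) ≤ 2 * ∑ v ∈ V, x v :=
  ⟨fun _ hr => t.exists_mem_Sol_hits hr, by
    have hcard : ((t.Sol t.steps).card : ℝ) ≤ 2 * t.steps := by
      exact_mod_cast t.card_Sol_le le_rfl
    linarith [t.steps_le_sum (fun v => (hx01 v).1) hxfeas]⟩

/-- Lemma 3: the set `S` returned by the KMN algorithm is feasible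
for the SRS covering program and has cardinality at most twice the cost of any
feasible fractional solution of its LP relaxation; hence `|S| ≤ 2·OPT(Q_l)` and
in particular `OPT(Q) ≤ 2·OPT(Q_l)`. -/
theorem KMN_two_approx_of_LP (R : Finset Ray) (V : Finset VSeg)
    (hVok : ∀ v ∈ V, v.lo ≤ v.hi)
    (hRdisj : ∀ r ∈ R, ∀ r' ∈ R, r ≠ r' → r.y ≠ r'.y)
    (hVdisj : ∀ v ∈ V, ∀ w ∈ V, v ≠ w → v.x ≠ w.x)
    (hfeas : ∀ r ∈ R, ∃ v ∈ V, hits r v)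
    (t : KMNTrace R V)
    (x : VSeg → ℝ)
    (hx01 : ∀ v, 0 ≤ x v ∧ x v ≤ 1)
    (hxfeas : ∀ r ∈ R, 1 ≤ ∑ v ∈ V.filter (fun v => hits r v), x v) :
    (∀ r ∈ R, ∃ v ∈ t.Sol t.steps, hits r v) ∧
    ((t.Sol t.steps).card : ℝ) ≤ 2 * ∑ v ∈ V, x v :=
  KMN_two_approx_of_LP_general R V t x hx01 hxfeas
end

section
/- Let Q be a covering ILP whose constraints each split as Σ_{v∈H_u} x_v + Σ_{v∈V_u} x_v ≥ 1, and suppose it decomposes (via the half-rounding sets A_1, A_2) into two sub-ILPs Q', Q'' with relaxations Q'_l, Q''_l such that OPT(Q') ≤ α·OPT(Q'_l) and OPT(Q'') ≤ β·OPT(Q''_l). Then OPT(Q) ≤ 2(α+β)·OPT(Q_l). -/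
attribute [local instance] Classical.propDecidable

/-!
Let `xs` be an optimal LP solution. Every constraint puts LP weight at least `1/2` on its
`H`-part or on its `V`-part, so the coordinatewise maximum of integral solutions of `Q'` and
`Q''` is feasible for `Q`: `OPT(Q) ≤ OPT(Q') + OPT(Q'')`. Doubling and capping `xs` on the
variables of a sub-program gives a fractional solution of `Q'_l` (resp. `Q''_l`) of value at most
`2 ∑ xs = 2 OPT(Q_l)`.
-/

open Finset Set

lemma one_le_sum_min_two_mul {ι : Type*} {s : Finset ι} {f : ι → ℝ} (hf : ∀ v ∈ s, 0 ≤ f v)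
    (h : (1/2 : ℝ) ≤ ∑ v ∈ s, f v) : 1 ≤ ∑ v ∈ s, min (2 * f v) 1 := by
  by_cases hbig : ∃ v ∈ s, 1 ≤ 2 * f v
  · obtain ⟨v, hv, hv1⟩ := hbig
    calc (1 : ℝ) = min (2 * f v) 1 := (min_eq_right hv1).symm
      _ ≤ ∑ v ∈ s, min (2 * f v) 1 :=
        single_le_sum (f := fun w => min (2 * f w) 1)
          (fun w hw => le_min (by linarith [hf w hw]) zero_le_one) hv
  · simp only [not_exists, not_and, not_le] at hbig
    rw [sum_congr rfl fun v hv => min_eq_left (hbig v hv).le, ← mul_sum]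
    linarith

section CoveringDecomposition

variable {ι κ : Type*} [Fintype ι]

/-- The variables `⋃_{u ∈ A} W u` of the sub-program, where `A = {u | 1/2 ≤ ∑_{v ∈ W u} xs v}`. -/
noncomputable def halfVars [Fintype κ] (W : κ → Finset ι) (xs : ι → ℝ) : Finset ι :=
  univ.filter fun w => ∃ u : κ, (1/2 : ℝ) ≤ ∑ v' ∈ W u, xs v' ∧ w ∈ W u

/-- `OPT(Q)` is the `sInf` of these values for `D = {0, 1}`, and `OPT(Q_l)` for `D = [0, 1]`. -/
def coverValues (D : Set ℝ) (H V : κ → Finset ι) : Set ℝ :=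
  {c | ∃ x : ι → ℝ, (∀ v, x v ∈ D) ∧ (∀ u : κ, 1 ≤ ∑ v ∈ H u, x v + ∑ v ∈ V u, x v) ∧
    c = ∑ v, x v}

/-- The sub-programs `Q'` (`W = H`) and `Q''` (`W = V`) for `D = {0, 1}`, and their relaxations
for `D = [0, 1]`. -/
def subCoverValues [Fintype κ] (D : Set ℝ) (W : κ → Finset ι) (xs : ι → ℝ) : Set ℝ :=
  {c | ∃ x : ι → ℝ, (∀ v, x v ∈ D) ∧ (∀ v, v ∉ halfVars W xs → x v = 0) ∧
    (∀ u : κ, (1/2 : ℝ) ≤ ∑ v' ∈ W u, xs v' → 1 ≤ ∑ v ∈ W u, x v) ∧ c = ∑ v, x v}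

variable {D : Set ℝ}

lemma coverValues_bddBelow (hD : D ⊆ Ici 0) (H V : κ → Finset ι) :
    BddBelow (coverValues D H V) :=
  ⟨0, by rintro _ ⟨x, hx, -, rfl⟩; exact sum_nonneg fun v _ => hD (hx v)⟩

lemma subCoverValues_bddBelow [Fintype κ] (hD : D ⊆ Ici 0) (W : κ → Finset ι) (xs : ι → ℝ) :
    BddBelow (subCoverValues D W xs) :=
  ⟨0, by rintro _ ⟨x, hx, -, -, rfl⟩; exact sum_nonneg fun v _ => hD (hx v)⟩

lemma isLeast_coverValues {H V : κ → Finset ι} {xs : ι → ℝ} (hxs : ∀ v, xs v ∈ D)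
    (hfeas : ∀ u, 1 ≤ ∑ v ∈ H u, xs v + ∑ v ∈ V u, xs v)
    (hopt : ∀ x : ι → ℝ, (∀ v, x v ∈ D) →
      (∀ u, 1 ≤ ∑ v ∈ H u, x v + ∑ v ∈ V u, x v) → ∑ v, xs v ≤ ∑ v, x v) :
    IsLeast (coverValues D H V) (∑ v, xs v) :=
  ⟨⟨xs, hxs, hfeas, rfl⟩, by rintro _ ⟨x, hx, hcov, rfl⟩; exact hopt x hx hcov⟩

lemma mem_halfVars [Fintype κ] {W : κ → Finset ι} {xs : ι → ℝ} {u : κ} {v : ι}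
    (hu : (1/2 : ℝ) ≤ ∑ v' ∈ W u, xs v') (hv : v ∈ W u) : v ∈ halfVars W xs :=
  mem_filter.2 ⟨mem_univ v, u, hu, hv⟩

lemma sInf_subCoverValues_Icc_le [Fintype κ] (W : κ → Finset ι) {xs : ι → ℝ}
    (hxs : ∀ v, 0 ≤ xs v) : sInf (subCoverValues (Icc 0 1) W xs) ≤ 2 * ∑ v, xs v := by
  set y : ι → ℝ := fun v => if v ∈ halfVars W xs then min (2 * xs v) 1 else 0
  have hy : ∀ v, y v ∈ Icc (0 : ℝ) 1 := fun v => by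
    by_cases hv : v ∈ halfVars W xs
    · simp only [y, if_pos hv]
      exact ⟨le_min (by linarith [hxs v]) zero_le_one, min_le_right _ _⟩
    · simp [y, hv]
  have hcov (u : κ) (hu : (1/2 : ℝ) ≤ ∑ v' ∈ W u, xs v') : 1 ≤ ∑ v ∈ W u, y v := by
    rw [sum_congr rfl fun v hv => if_pos (mem_halfVars hu hv)]
    exact one_le_sum_min_two_mul (fun v _ => hxs v) hu
  calc sInf _ ≤ ∑ v, y v :=
        csInf_le (subCoverValues_bddBelow (fun _ h => h.1) W xs)
          ⟨y, hy, fun v hv => if_neg hv, hcov, rfl⟩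
    _ ≤ ∑ v, 2 * xs v := sum_le_sum fun v _ => by
        by_cases hv : v ∈ halfVars W xs
        · simp only [y, if_pos hv]; exact min_le_left _ _
        · simp only [y, if_neg hv]; linarith [hxs v]
    _ = 2 * ∑ v, xs v := (mul_sum _ _ _).symm

lemma subCoverValues_nonempty [Fintype κ] (h0 : 0 ∈ D) (h1 : 1 ∈ D) (W : κ → Finset ι)
    (xs : ι → ℝ) : (subCoverValues D W xs).Nonempty := by
  set y : ι → ℝ := fun v => if v ∈ halfVars W xs then 1 else 0
  have hy01 (v : ι) : y v = 0 ∨ y v = 1 := by by_cases hv : v ∈ halfVars W xs <;> simp [y, hv]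
  refine ⟨_, y, fun v => (hy01 v).elim (· ▸ h0) (· ▸ h1), fun v hv => if_neg hv,
    fun u hu => ?_, rfl⟩
  obtain ⟨v, hv, -⟩ := exists_ne_zero_of_sum_ne_zero (s := W u) (f := xs) (by linarith)
  calc (1 : ℝ) = y v := (if_pos (mem_halfVars hu hv)).symm
    _ ≤ ∑ w ∈ W u, y w :=
      single_le_sum (fun w _ => by rcases hy01 w with h | h <;> norm_num [h]) hv

lemma max_mem_coverValues (hD : D ⊆ Ici 0) {H V : κ → Finset ι} {xs : ι → ℝ}
    (hfeas : ∀ u, 1 ≤ ∑ v ∈ H u, xs v + ∑ v ∈ V u, xs v) {x' x'' : ι → ℝ}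
    (hx' : ∀ v, x' v ∈ D) (hcov' : ∀ u, (1/2 : ℝ) ≤ ∑ v ∈ H u, xs v → 1 ≤ ∑ v ∈ H u, x' v)
    (hx'' : ∀ v, x'' v ∈ D) (hcov'' : ∀ u, (1/2 : ℝ) ≤ ∑ v ∈ V u, xs v → 1 ≤ ∑ v ∈ V u, x'' v) :
    ∑ v, max (x' v) (x'' v) ∈ coverValues D H V := by
  have hz (v : ι) : max (x' v) (x'' v) ∈ D := by
    rcases max_choice (x' v) (x'' v) with h | h <;> simp only [h, hx', hx'']
  refine ⟨_, hz, fun u => ?_, rfl⟩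
  have hH : 0 ≤ ∑ v ∈ H u, max (x' v) (x'' v) := sum_nonneg fun v _ => hD (hz v)
  have hV : 0 ≤ ∑ v ∈ V u, max (x' v) (x'' v) := sum_nonneg fun v _ => hD (hz v)
  rcases le_or_gt (1/2 : ℝ) (∑ v ∈ H u, xs v) with hu | hu
  · have := (hcov' u hu).trans (sum_le_sum fun v _ => le_max_left (x' v) (x'' v))
    linarith
  · have := (hcov'' u (by linarith [hfeas u])).trans
      (sum_le_sum fun v _ => le_max_right (x' v) (x'' v))
    linarith

lemma sInf_coverValues_le_add [Fintype κ] (hD : D ⊆ Ici 0) (h0 : 0 ∈ D) (h1 : 1 ∈ D)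
    {H V : κ → Finset ι} {xs : ι → ℝ} (hfeas : ∀ u, 1 ≤ ∑ v ∈ H u, xs v + ∑ v ∈ V u, xs v) :
    sInf (coverValues D H V) ≤ sInf (subCoverValues D H xs) + sInf (subCoverValues D V xs) := by
  have hH := subCoverValues_nonempty h0 h1 H xs
  have hV := subCoverValues_nonempty h0 h1 V xs
  rw [← csInf_add hH (subCoverValues_bddBelow hD H xs) hV (subCoverValues_bddBelow hD V xs)]
  refine le_csInf (hH.add hV) ?_
  rintro _ ⟨_, ⟨x', hx', -, hcov', rfl⟩, _, ⟨x'', hx'', -, hcov'', rfl⟩, rfl⟩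
  calc sInf (coverValues D H V) ≤ ∑ v, max (x' v) (x'' v) :=
        csInf_le (coverValues_bddBelow hD H V)
          (max_mem_coverValues hD hfeas hx' hcov' hx'' hcov'')
    _ ≤ ∑ v, x' v + ∑ v, x'' v := by
        rw [← sum_add_distrib]
        exact sum_le_sum fun v _ => max_le_add_of_nonneg (hD (hx' v)) (hD (hx'' v))

end CoveringDecomposition

open Finset in
theorem covering_ILP_decomposition_general {ι κ : Type*} [Fintype ι] [Fintype κ]
    (H V : κ → Finset ι)
    (α β : ℝ) (hα : 0 ≤ α) (hβ : 0 ≤ β)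
    (xs : ι → ℝ)
    (hbound : ∀ v, xs v ∈ Set.Icc (0 : ℝ) 1)
    (hfeas : ∀ u, 1 ≤ ∑ v ∈ H u, xs v + ∑ v ∈ V u, xs v)
    (hopt : ∀ x' : ι → ℝ, (∀ v, x' v ∈ Set.Icc (0 : ℝ) 1) →
      (∀ u, 1 ≤ ∑ v ∈ H u, x' v + ∑ v ∈ V u, x' v) → ∑ v, xs v ≤ ∑ v, x' v)
    -- OPT(Q') ≤ α · OPT(Q'_l)
    (hQ' : sInf {c : ℝ | ∃ x : ι → ℝ, (∀ v, x v = 0 ∨ x v = 1) ∧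
        (∀ v, v ∉ univ.filter (fun w => ∃ u : κ, (1/2 : ℝ) ≤ ∑ v' ∈ H u, xs v' ∧ w ∈ H u) → x v = 0) ∧
        (∀ u : κ, (1/2 : ℝ) ≤ ∑ v' ∈ H u, xs v' → 1 ≤ ∑ v ∈ H u, x v) ∧ c = ∑ v, x v}
      ≤ α * sInf {c : ℝ | ∃ x : ι → ℝ, (∀ v, x v ∈ Set.Icc (0 : ℝ) 1) ∧
        (∀ v, v ∉ univ.filter (fun w => ∃ u : κ, (1/2 : ℝ) ≤ ∑ v' ∈ H u, xs v' ∧ w ∈ H u) → x v = 0) ∧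
        (∀ u : κ, (1/2 : ℝ) ≤ ∑ v' ∈ H u, xs v' → 1 ≤ ∑ v ∈ H u, x v) ∧ c = ∑ v, x v})
    -- OPT(Q'') ≤ β · OPT(Q''_l)
    (hQ'' : sInf {c : ℝ | ∃ x : ι → ℝ, (∀ v, x v = 0 ∨ x v = 1) ∧
        (∀ v, v ∉ univ.filter (fun w => ∃ u : κ, (1/2 : ℝ) ≤ ∑ v' ∈ V u, xs v' ∧ w ∈ V u) → x v = 0) ∧
        (∀ u : κ, (1/2 : ℝ) ≤ ∑ v' ∈ V u, xs v' → 1 ≤ ∑ v ∈ V u, x v) ∧ c = ∑ v, x v}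
      ≤ β * sInf {c : ℝ | ∃ x : ι → ℝ, (∀ v, x v ∈ Set.Icc (0 : ℝ) 1) ∧
        (∀ v, v ∉ univ.filter (fun w => ∃ u : κ, (1/2 : ℝ) ≤ ∑ v' ∈ V u, xs v' ∧ w ∈ V u) → x v = 0) ∧
        (∀ u : κ, (1/2 : ℝ) ≤ ∑ v' ∈ V u, xs v' → 1 ≤ ∑ v ∈ V u, x v) ∧ c = ∑ v, x v}) :
    sInf {c : ℝ | ∃ x : ι → ℝ, (∀ v, x v = 0 ∨ x v = 1) ∧
        (∀ u : κ, 1 ≤ ∑ v ∈ H u, x v + ∑ v ∈ V u, x v) ∧ c = ∑ v, x v}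
      ≤ 2 * (α + β) * sInf {c : ℝ | ∃ x : ι → ℝ, (∀ v, x v ∈ Set.Icc (0 : ℝ) 1) ∧
        (∀ u : κ, 1 ≤ ∑ v ∈ H u, x v + ∑ v ∈ V u, x v) ∧ c = ∑ v, x v} := by
  have hLP : sInf (coverValues (Icc 0 1) H V) = ∑ v, xs v :=
    (isLeast_coverValues hbound hfeas hopt).csInf_eq
  have hxs (v : ι) : 0 ≤ xs v := (hbound v).1
  calc sInf (coverValues {0, 1} H V)
      ≤ sInf (subCoverValues {0, 1} H xs) + sInf (subCoverValues {0, 1} V xs) :=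
        sInf_coverValues_le_add (by simp [insert_subset_iff]) (by simp) (by simp) hfeas
    _ ≤ α * (2 * ∑ v, xs v) + β * (2 * ∑ v, xs v) :=
        add_le_add (hQ'.trans (mul_le_mul_of_nonneg_left (sInf_subCoverValues_Icc_le H hxs) hα))
          (hQ''.trans (mul_le_mul_of_nonneg_left (sInf_subCoverValues_Icc_le V hxs) hβ))
    _ = 2 * (α + β) * sInf (coverValues (Icc 0 1) H V) := by rw [hLP]; ring

open Finset in
/-- if a covering ILP `Q` with split constraints
`∑_{v∈H u} x v + ∑_{v∈V u} x v ≥ 1` decomposes via the half-rounding sets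
`A₁ = {u : ∑_{H u} x* ≥ 1/2}`, `A₂ = {u : ∑_{V u} x* ≥ 1/2}` (for an optimal LP
solution `x*`) into sub-ILPs `Q'` (cover `A₁` by variables of `B₁ = ⋃_{u∈A₁} H u`)
and `Q''` (cover `A₂` by variables of `B₂ = ⋃_{u∈A₂} V u`) with
`OPT(Q') ≤ α·OPT(Q'_l)` and `OPT(Q'') ≤ β·OPT(Q''_l)`, then
`OPT(Q) ≤ 2(α+β)·OPT(Q_l)`. -/
theorem covering_ILP_decomposition {ι κ : Type*} [Fintype ι] [Fintype κ]
    (H V : κ → Finset ι) (hdisj : ∀ u, Disjoint (H u) (V u))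
    (hne : ∀ u, (H u ∪ V u).Nonempty)
    (α β : ℝ) (hα : 0 ≤ α) (hβ : 0 ≤ β)
    (xs : ι → ℝ)
    (hbound : ∀ v, xs v ∈ Set.Icc (0 : ℝ) 1)
    (hfeas : ∀ u, 1 ≤ ∑ v ∈ H u, xs v + ∑ v ∈ V u, xs v)
    (hopt : ∀ x' : ι → ℝ, (∀ v, x' v ∈ Set.Icc (0 : ℝ) 1) →
      (∀ u, 1 ≤ ∑ v ∈ H u, x' v + ∑ v ∈ V u, x' v) → ∑ v, xs v ≤ ∑ v, x' v)
    -- OPT(Q') ≤ α · OPT(Q'_l)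
    (hQ' : sInf {c : ℝ | ∃ x : ι → ℝ, (∀ v, x v = 0 ∨ x v = 1) ∧
        (∀ v, v ∉ univ.filter (fun w => ∃ u : κ, (1/2 : ℝ) ≤ ∑ v' ∈ H u, xs v' ∧ w ∈ H u) → x v = 0) ∧
        (∀ u : κ, (1/2 : ℝ) ≤ ∑ v' ∈ H u, xs v' → 1 ≤ ∑ v ∈ H u, x v) ∧ c = ∑ v, x v}
      ≤ α * sInf {c : ℝ | ∃ x : ι → ℝ, (∀ v, x v ∈ Set.Icc (0 : ℝ) 1) ∧
        (∀ v, v ∉ univ.filter (fun w => ∃ u : κ, (1/2 : ℝ) ≤ ∑ v' ∈ H u, xs v' ∧ w ∈ H u) → x v = 0) ∧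
        (∀ u : κ, (1/2 : ℝ) ≤ ∑ v' ∈ H u, xs v' → 1 ≤ ∑ v ∈ H u, x v) ∧ c = ∑ v, x v})
    -- OPT(Q'') ≤ β · OPT(Q''_l)
    (hQ'' : sInf {c : ℝ | ∃ x : ι → ℝ, (∀ v, x v = 0 ∨ x v = 1) ∧
        (∀ v, v ∉ univ.filter (fun w => ∃ u : κ, (1/2 : ℝ) ≤ ∑ v' ∈ V u, xs v' ∧ w ∈ V u) → x v = 0) ∧
        (∀ u : κ, (1/2 : ℝ) ≤ ∑ v' ∈ V u, xs v' → 1 ≤ ∑ v ∈ V u, x v) ∧ c = ∑ v, x v}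
      ≤ β * sInf {c : ℝ | ∃ x : ι → ℝ, (∀ v, x v ∈ Set.Icc (0 : ℝ) 1) ∧
        (∀ v, v ∉ univ.filter (fun w => ∃ u : κ, (1/2 : ℝ) ≤ ∑ v' ∈ V u, xs v' ∧ w ∈ V u) → x v = 0) ∧
        (∀ u : κ, (1/2 : ℝ) ≤ ∑ v' ∈ V u, xs v' → 1 ≤ ∑ v ∈ V u, x v) ∧ c = ∑ v, x v}) :
    sInf {c : ℝ | ∃ x : ι → ℝ, (∀ v, x v = 0 ∨ x v = 1) ∧
        (∀ u : κ, 1 ≤ ∑ v ∈ H u, x v + ∑ v ∈ V u, x v) ∧ c = ∑ v, x v}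
      ≤ 2 * (α + β) * sInf {c : ℝ | ∃ x : ι → ℝ, (∀ v, x v ∈ Set.Icc (0 : ℝ) 1) ∧
        (∀ u : κ, 1 ≤ ∑ v ∈ H u, x v + ∑ v ∈ V u, x v) ∧ c = ∑ v, x v} :=
  covering_ILP_decomposition_general H V α β hα hβ xs hbound hfeas hopt hQ' hQ''
end

section
/- Let R be a finite set of leftward-directed rays all of which cross the vertical line x = 0 (equivalently, rightward-directed rays from x-coordinates < 0), and V a finite set of vertical segments all with x-coordinate strictly less than 0. Suppose the SSR covering ILP (choose minimum rays to hit all segments in V) satisfies OPT ≤ 2·OPT_LP, and similarly the SRS ILP satisfies OPT ≤ 2·OPT_LP. Then for any vertically-stabbed-L graph G given with its representation, the dominating set ILP Q satisfies: there is a feasible dominating set D with |D| ≤ 8·OPT(Q_l) ≤ 8·OPT(Q). -/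
attribute [local instance] Classical.propDecidable

/-- A rightward-directed horizontal ray with left endpoint `(x, y)`:
the point set `{(x', y) : x ≤ x'}`. -/
structure RayR where
  x : ℝ
  y : ℝ

/-- A rightward-directed ray intersects a vertical segment. -/
def hitsR (r : RayR) (v : VSeg) : Prop :=
  r.x ≤ v.x ∧ v.lo ≤ r.y ∧ r.y ≤ v.hi

/-- An `L`-path stabbed by the vertical line `x = 0`: corner `(cx, cy)` with `cx < 0`,
vertical segment going up from the corner to height `top`, and horizontal segment
going right from the corner to `x`-coordinate `rx ≥ 0` (so it crosses `x = 0`). -/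
structure LPath where
  cx : ℝ
  cy : ℝ
  top : ℝ
  rx : ℝ
  corner_neg : cx < 0
  crosses : 0 ≤ rx
  vert_ok : cy ≤ top

/-- The point set of an `L`-path. -/
def LPath.pts (L : LPath) : Set (ℝ × ℝ) :=
  {p | (p.1 = L.cx ∧ L.cy ≤ p.2 ∧ p.2 ≤ L.top) ∨
       (p.2 = L.cy ∧ L.cx ≤ p.1 ∧ p.1 ≤ L.rx)}

/-- The horizontal segment of an `L`-path. -/
def LPath.hseg (L : LPath) : Set (ℝ × ℝ) :=
  {p | p.2 = L.cy ∧ L.cx ≤ p.1 ∧ p.1 ≤ L.rx}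

/-!
Two L-paths meet iff the horizontal arm of one meets the vertical arm of the other, and since every
horizontal arm reaches `x = 0`, to the right of all corners, a horizontal arm may be replaced by the
rightward ray from its corner. Hence the constraint of `u` in the dominating-set LP splits into a
ray part (the ray of `u` stabbed by vertical arms) and a segment part (the vertical arm of `u`
stabbed by rays), one of which carries weight at least `1/2`. Doubling the LP solution gives a
fractional SRS solution for the first kind of constraints and a fractional SSR solution for the
second, each of cost at most `2 · Σ x`; the assumed integrality gaps `2` turn them into integral
covers of size at most `4 · Σ x` each, whose union dominates.
-/

open Finset

section

variable {ι α β : Type*}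

theorem sum_filter_or_le {M : Type*} [AddCommMonoid M] [PartialOrder M] [IsOrderedAddMonoid M]
    (s : Finset ι) (p q : ι → Prop) {f : ι → M} (hf : ∀ i ∈ s, 0 ≤ f i) :
    ∑ i ∈ s with p i ∨ q i, f i ≤ ∑ i ∈ s with p i, f i + ∑ i ∈ s with q i, f i := by
  rw [filter_or, ← sum_union_inter]
  exact le_add_of_nonneg_right <|
    sum_nonneg fun i hi => hf i (mem_filter.mp (mem_of_mem_inter_left hi)).1

theorem sum_filter_comp_eq_sum_fiberwise {M : Type*} [AddCommMonoid M] (S : Finset ι) (f : ι → α)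
    (p : α → Prop) (x : ι → M) :
    ∑ i ∈ S with p (f i), x i = ∑ a ∈ S.image f with p a, ∑ i ∈ S with f i = a, x i := by
  rw [sum_filter, sum_filter, ← sum_fiberwise_of_maps_to fun i hi => mem_image_of_mem f hi]
  refine sum_congr rfl fun a _ => ?_
  split_ifs with ha
  · exact sum_congr rfl fun i hi => by rw [(mem_filter.mp hi).2, if_pos ha]
  · exact sum_eq_zero fun i hi => by rw [(mem_filter.mp hi).2, if_neg ha]

section Covering

variable (A : Finset α) (B : Finset β) (rel : α → β → Prop)

/- The feasible values of the set-cover ILP and of its LP relaxation (covering `B` by elements of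
`A`, where `a` covers `b` iff `rel a b`); their infima are `OPT` and `OPT_LP`. -/
def coverCosts : Set ℝ :=
  {c | ∃ s : Finset α, s ⊆ A ∧ (∀ b ∈ B, ∃ a ∈ s, rel a b) ∧ c = s.card}

def fracCoverCosts : Set ℝ :=
  {c | ∃ x : α → ℝ, (∀ a, 0 ≤ x a ∧ x a ≤ 1) ∧
    (∀ b ∈ B, 1 ≤ ∑ a ∈ A with rel a b, x a) ∧ c = ∑ a ∈ A, x a}

theorem coverCosts_subset_fracCoverCosts : coverCosts A B rel ⊆ fracCoverCosts A B rel := by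
  rintro _ ⟨s, hsA, hs, rfl⟩
  refine ⟨fun a => if a ∈ s then 1 else 0, fun a => by dsimp only; split_ifs <;> norm_num,
    fun b hb => ?_, ?_⟩
  · obtain ⟨a, has, hab⟩ := hs b hb
    calc (1 : ℝ) = if a ∈ s then 1 else 0 := (if_pos has).symm
      _ ≤ ∑ a ∈ A with rel a b, if a ∈ s then 1 else 0 :=
        single_le_sum (f := fun a => if a ∈ s then (1 : ℝ) else 0)
          (fun _ _ => by split_ifs <;> norm_num) (mem_filter.mpr ⟨hsA has, hab⟩)
  · rw [sum_ite_mem, inter_eq_right.mpr hsA, sum_const, nsmul_one]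

theorem fracCoverCosts_bddBelow : BddBelow (fracCoverCosts A B rel) :=
  ⟨0, by rintro _ ⟨x, hx, -, rfl⟩; exact sum_nonneg fun a _ => (hx a).1⟩

theorem coverCosts_finite : (coverCosts A B rel).Finite :=
  (A.powerset.image fun s => (s.card : ℝ)).finite_toSet.subset <| by
    rintro _ ⟨s, hsA, -, rfl⟩
    simpa using ⟨s, hsA, rfl⟩

theorem exists_cover_card_eq_sInf (hne : (coverCosts A B rel).Nonempty) :
    ∃ s ⊆ A, (∀ b ∈ B, ∃ a ∈ s, rel a b) ∧ (s.card : ℝ) = sInf (coverCosts A B rel) := by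
  obtain ⟨s, hsA, hs, hcard⟩ := hne.csInf_mem (coverCosts_finite A B rel)
  exact ⟨s, hsA, hs, hcard.symm⟩

theorem sInf_fracCoverCosts_le_sInf_coverCosts (hne : (coverCosts A B rel).Nonempty) :
    sInf (fracCoverCosts A B rel) ≤ sInf (coverCosts A B rel) :=
  csInf_le_csInf (fracCoverCosts_bddBelow A B rel) hne (coverCosts_subset_fracCoverCosts A B rel)

theorem sInf_coverCosts_le_mul_sInf_fracCoverCosts {k : ℝ} (hk : 0 < k)
    (hround : ∀ c ∈ fracCoverCosts A B rel, ∃ d ∈ coverCosts A B rel, d ≤ k * c) :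
    sInf (coverCosts A B rel) ≤ k * sInf (fracCoverCosts A B rel) := by
  have hsub := coverCosts_subset_fracCoverCosts A B rel
  rcases (fracCoverCosts A B rel).eq_empty_or_nonempty with hempty | hne
  · simp [hempty, Set.subset_empty_iff.mp (hempty ▸ hsub)]
  rw [← div_le_iff₀' hk]
  refine le_csInf hne fun c hc => ?_
  obtain ⟨d, hd, hdc⟩ := hround c hc
  rw [div_le_iff₀' hk]
  exact (csInf_le ((fracCoverCosts_bddBelow A B rel).mono hsub) hd).trans hdc

theorem coverCosts_univ [Fintype α] [Fintype β] :
    coverCosts univ univ rel =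
      {c : ℝ | ∃ s : Finset α, (∀ b, ∃ a ∈ s, rel a b) ∧ c = s.card} := by
  simp [coverCosts]

theorem fracCoverCosts_univ [Fintype α] [Fintype β] :
    fracCoverCosts univ univ rel = {c | ∃ x : α → ℝ, (∀ a, 0 ≤ x a ∧ x a ≤ 1) ∧
      (∀ b, 1 ≤ ∑ a with rel a b, x a) ∧ c = ∑ a, x a} := by
  simp [fracCoverCosts]

variable {B rel}

theorem sInf_fracCoverCosts_image_le {f : ι → α} {S : Finset ι} {x : ι → ℝ}
    (hx : ∀ i ∈ S, 0 ≤ x i) (hB : ∀ b ∈ B, 1 ≤ ∑ i ∈ S with rel (f i) b, x i) :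
    sInf (fracCoverCosts (S.image f) B rel) ≤ ∑ i ∈ S, x i := by
  set fiber : α → ℝ := fun a => ∑ i ∈ S with f i = a, x i
  have hfiber : ∀ a, 0 ≤ fiber a := fun a => sum_nonneg fun i hi => hx i (mem_filter.mp hi).1
  have hfeas : ∀ b ∈ B, 1 ≤ ∑ a ∈ S.image f with rel a b, min 1 (fiber a) := by
    intro b hb
    by_cases hbig : ∃ a ∈ (S.image f).filter (rel · b), 1 ≤ fiber a
    · obtain ⟨a, ha, h1⟩ := hbig
      calc (1 : ℝ) = min 1 (fiber a) := (min_eq_left h1).symm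
        _ ≤ _ := single_le_sum (f := fun a => min 1 (fiber a))
          (fun a _ => le_min zero_le_one (hfiber a)) ha
    · push Not at hbig
      rw [sum_congr rfl fun a ha => min_eq_right (hbig a ha).le]
      exact (hB b hb).trans_eq (sum_filter_comp_eq_sum_fiberwise S f (rel · b) x)
  refine (csInf_le (fracCoverCosts_bddBelow _ B rel)
    ⟨fun a => min 1 (fiber a), fun a => ⟨le_min zero_le_one (hfiber a), min_le_left _ _⟩,
      hfeas, rfl⟩).trans ?_
  calc ∑ a ∈ S.image f, min 1 (fiber a) ≤ ∑ a ∈ S.image f, fiber a :=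
        sum_le_sum fun a _ => min_le_right _ _
    _ = ∑ i ∈ S, x i := sum_fiberwise_of_maps_to (fun i hi => mem_image_of_mem f hi) x

theorem exists_cover_card_le_of_fracCover_image {f : ι → α} {S : Finset ι} {x : ι → ℝ} {γ : ℝ}
    (hγ : 0 ≤ γ)
    (hgap : sInf (coverCosts (S.image f) B rel) ≤ γ * sInf (fracCoverCosts (S.image f) B rel))
    (hx : ∀ i ∈ S, 0 ≤ x i) (hB : ∀ b ∈ B, 1 ≤ ∑ i ∈ S with rel (f i) b, x i) :
    ∃ D ⊆ S, (∀ b ∈ B, ∃ i ∈ D, rel (f i) b) ∧ (D.card : ℝ) ≤ γ * ∑ i ∈ S, x i := by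
  have hne : (coverCosts (S.image f) B rel).Nonempty := by
    refine ⟨_, S.image f, subset_rfl, fun b hb => ?_, rfl⟩
    obtain ⟨i, hi⟩ := nonempty_of_sum_ne_zero (by linarith [hB b hb] :
      ∑ i ∈ S with rel (f i) b, x i ≠ 0)
    exact ⟨f i, mem_image_of_mem f (mem_filter.mp hi).1, (mem_filter.mp hi).2⟩
  obtain ⟨t, htS, ht, hcard⟩ := exists_cover_card_eq_sInf _ _ _ hne
  obtain ⟨D, hDS, hinj, rfl⟩ := exists_subset_injOn_image_eq_of_surjOn (S : Set ι) t
    fun a ha => by simpa using htS ha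
  refine ⟨D, coe_subset.mp hDS, fun b hb => ?_, ?_⟩
  · obtain ⟨a, ha, hab⟩ := ht b hb
    obtain ⟨i, hi, rfl⟩ := mem_image.mp ha
    exact ⟨i, hi, hab⟩
  · calc (D.card : ℝ) = (D.image f).card := by rw [card_image_of_injOn hinj]
      _ ≤ γ * sInf (fracCoverCosts (S.image f) B rel) := hcard ▸ hgap
      _ ≤ γ * ∑ i ∈ S, x i := mul_le_mul_of_nonneg_left (sInf_fracCoverCosts_image_le hx hB) hγ

end Covering

namespace LPath

def ray (L : LPath) : RayR := ⟨L.cx, L.cy⟩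

def vseg (L : LPath) : VSeg := ⟨L.cx, L.cy, L.top⟩

theorem pts_inter_nonempty_iff (L L' : LPath) :
    (L.pts ∩ L'.pts).Nonempty ↔ hitsR L.ray L'.vseg ∨ hitsR L'.ray L.vseg := by
  constructor
  · rintro ⟨p, hp, hp'⟩
    simp only [hitsR, ray, vseg]
    rcases hp with ⟨e1, e2, e3⟩ | ⟨e1, e2, e3⟩ <;> rcases hp' with ⟨f1, f2, f3⟩ | ⟨f1, f2, f3⟩
    · rcases le_total L.cy L'.cy with hc | hc
      · exact Or.inr ⟨by rw [← e1, ← f1], hc, by linarith⟩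
      · exact Or.inl ⟨by rw [← e1, ← f1], hc, by linarith⟩
    · exact Or.inr ⟨by linarith, by linarith, by linarith⟩
    · exact Or.inl ⟨by linarith, by linarith, by linarith⟩
    · rcases le_total L.cx L'.cx with hc | hc
      · exact Or.inl ⟨hc, by linarith [L'.vert_ok], by linarith [L'.vert_ok]⟩
      · exact Or.inr ⟨hc, by linarith [L.vert_ok], by linarith [L.vert_ok]⟩
  · rintro (⟨h1, h2, h3⟩ | ⟨h1, h2, h3⟩)
    · exact ⟨(L'.cx, L.cy), Or.inr ⟨rfl, h1, L'.corner_neg.le.trans L.crosses⟩,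
        Or.inl ⟨rfl, h2, h3⟩⟩
    · exact ⟨(L.cx, L'.cy), Or.inl ⟨rfl, h2, h3⟩,
        Or.inr ⟨rfl, h1, L.corner_neg.le.trans L'.crosses⟩⟩

theorem pts_inter_self_nonempty (L : LPath) : (L.pts ∩ L.pts).Nonempty :=
  (pts_inter_nonempty_iff L L).2 (Or.inl ⟨le_rfl, le_rfl, L.vert_ok⟩)

end LPath

theorem exists_dominating_card_le_eight_mul_sum
    (hSSR : ∀ (R : Finset RayR) (V : Finset VSeg),
      sInf (coverCosts R V hitsR) ≤ 2 * sInf (fracCoverCosts R V hitsR))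
    (hSRS : ∀ (R : Finset RayR) (V : Finset VSeg),
      sInf (coverCosts V R fun v r => hitsR r v) ≤
        2 * sInf (fracCoverCosts V R fun v r => hitsR r v))
    [Fintype ι] (P : ι → LPath) {x : ι → ℝ} (hx : ∀ i, 0 ≤ x i)
    (hdom : ∀ u, 1 ≤ ∑ v with ((P v).pts ∩ (P u).pts).Nonempty, x v) :
    ∃ D : Finset ι, (∀ u, ∃ v ∈ D, ((P v).pts ∩ (P u).pts).Nonempty) ∧
      (D.card : ℝ) ≤ 8 * ∑ v, x v := by
  have hsplit : ∀ u, 1 ≤ 2 * ∑ v with hitsR (P v).ray (P u).vseg, x v ∨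
      1 ≤ 2 * ∑ v with hitsR (P u).ray (P v).vseg, x v := by
    intro u
    have hor := sum_filter_or_le univ (fun v => hitsR (P v).ray (P u).vseg)
      (fun v => hitsR (P u).ray (P v).vseg) fun v _ => hx v
    have hu := hdom u
    simp only [LPath.pts_inter_nonempty_iff] at hu
    by_contra! hlt
    linarith
  have hx2 : ∀ v ∈ univ, 0 ≤ 2 * x v := fun v _ => by linarith [hx v]
  obtain ⟨Dssr, -, hDssr, hcard_ssr⟩ := exists_cover_card_le_of_fracCover_image
    (f := fun v => (P v).ray) (S := univ) (rel := hitsR)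
    (B := (univ.filter fun u => 1 ≤ 2 * ∑ v with hitsR (P v).ray (P u).vseg, x v).image
      fun u => (P u).vseg)
    zero_le_two (hSSR _ _) hx2 (fun _ hb => by
      obtain ⟨u, hu, rfl⟩ := mem_image.mp hb
      simpa only [mul_sum] using (mem_filter.mp hu).2)
  obtain ⟨Dsrs, -, hDsrs, hcard_srs⟩ := exists_cover_card_le_of_fracCover_image
    (f := fun v => (P v).vseg) (S := univ) (rel := fun v r => hitsR r v)
    (B := (univ.filter fun u => 1 ≤ 2 * ∑ v with hitsR (P u).ray (P v).vseg, x v).image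
      fun u => (P u).ray)
    zero_le_two (hSRS _ _) hx2 (fun _ hb => by
      obtain ⟨u, hu, rfl⟩ := mem_image.mp hb
      simpa only [mul_sum] using (mem_filter.mp hu).2)
  refine ⟨Dssr ∪ Dsrs, fun u => ?_, ?_⟩
  · rcases hsplit u with h | h
    · obtain ⟨v, hv, hvu⟩ := hDssr _ (mem_image_of_mem _ (mem_filter.mpr ⟨mem_univ u, h⟩))
      exact ⟨v, mem_union_left _ hv, (LPath.pts_inter_nonempty_iff _ _).2 (Or.inl hvu)⟩
    · obtain ⟨v, hv, hvu⟩ := hDsrs _ (mem_image_of_mem _ (mem_filter.mpr ⟨mem_univ u, h⟩))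
      exact ⟨v, mem_union_right _ hv, (LPath.pts_inter_nonempty_iff _ _).2 (Or.inr hvu)⟩
  · calc ((Dssr ∪ Dsrs).card : ℝ) ≤ Dssr.card + Dsrs.card := by exact_mod_cast card_union_le _ _
      _ ≤ 2 * ∑ v, 2 * x v + 2 * ∑ v, 2 * x v := add_le_add hcard_ssr hcard_srs
      _ = 8 * ∑ v, x v := by rw [← mul_sum]; ring

end

open Finset in
/-- assuming the SSR covering ILP (choose a minimum number of rays
hitting all vertical segments) and the SRS ILP (choose a minimum number of vertical
segments hitting all rays) both have optimum at most twice their LP optima, then for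
any vertically-stabbed-L graph given by a representation `P : ι → LPath` (with
`H u` = neighbours meeting the horizontal segment of `L_u` and `V u` the remaining
neighbours), the dominating-set ILP `Q` admits a feasible dominating set `D` with
`|D| ≤ 8·OPT(Q_l) ≤ 8·OPT(Q)`. -/
theorem stabbedL_dominating_set_8_approx
    (hSSR : ∀ (R : Finset RayR) (V : Finset VSeg),
      sInf {c : ℝ | ∃ s : Finset RayR, s ⊆ R ∧ (∀ v ∈ V, ∃ r ∈ s, hitsR r v) ∧
          c = s.card}
        ≤ 2 * sInf {c : ℝ | ∃ x : RayR → ℝ, (∀ r, 0 ≤ x r ∧ x r ≤ 1) ∧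
          (∀ v ∈ V, 1 ≤ ∑ r ∈ R.filter (fun r => hitsR r v), x r) ∧
          c = ∑ r ∈ R, x r})
    (hSRS : ∀ (R : Finset RayR) (V : Finset VSeg),
      sInf {c : ℝ | ∃ s : Finset VSeg, s ⊆ V ∧ (∀ r ∈ R, ∃ v ∈ s, hitsR r v) ∧
          c = s.card}
        ≤ 2 * sInf {c : ℝ | ∃ x : VSeg → ℝ, (∀ v, 0 ≤ x v ∧ x v ≤ 1) ∧
          (∀ r ∈ R, 1 ≤ ∑ v ∈ V.filter (fun v => hitsR r v), x v) ∧
          c = ∑ v ∈ V, x v})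
    {ι : Type*} [Fintype ι] (P : ι → LPath) :
    ∃ D : Finset ι,
      (∀ u : ι, ∃ v ∈ D, ((P v).pts ∩ (P u).pts).Nonempty) ∧
      ((D.card : ℝ) ≤ 8 * sInf {c : ℝ | ∃ x : ι → ℝ, (∀ v, 0 ≤ x v ∧ x v ≤ 1) ∧
          (∀ u : ι, 1 ≤ ∑ v ∈ univ.filter (fun v => ((P v).pts ∩ (P u).pts).Nonempty), x v) ∧
          c = ∑ v, x v}) ∧
      sInf {c : ℝ | ∃ x : ι → ℝ, (∀ v, 0 ≤ x v ∧ x v ≤ 1) ∧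
          (∀ u : ι, 1 ≤ ∑ v ∈ univ.filter (fun v => ((P v).pts ∩ (P u).pts).Nonempty), x v) ∧
          c = ∑ v, x v}
        ≤ sInf {c : ℝ | ∃ D' : Finset ι,
            (∀ u : ι, ∃ v ∈ D', ((P v).pts ∩ (P u).pts).Nonempty) ∧ c = D'.card} := by
  rw [← coverCosts_univ, ← fracCoverCosts_univ]
  have hne : (coverCosts univ univ fun v u => ((P v).pts ∩ (P u).pts).Nonempty).Nonempty :=
    ⟨_, univ, subset_rfl, fun u _ => ⟨u, mem_univ u, (P u).pts_inter_self_nonempty⟩, rfl⟩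
  obtain ⟨D, -, hD, hcard⟩ := exists_cover_card_eq_sInf _ _ _ hne
  refine ⟨D, fun u => hD u (mem_univ u), ?_, sInf_fracCoverCosts_le_sInf_coverCosts _ _ _ hne⟩
  rw [hcard]
  refine sInf_coverCosts_le_mul_sInf_fracCoverCosts _ _ _ (by norm_num) ?_
  rintro _ ⟨x, hx, hdom, rfl⟩
  obtain ⟨D', hD', hcard'⟩ := exists_dominating_card_le_eight_mul_sum hSSR hSRS P
    (fun v => (hx v).1) fun u => hdom u (mem_univ u)
  exact ⟨_, ⟨D', subset_univ _, fun u _ => hD' u, rfl⟩, hcard'⟩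
end

section
/- Let S be a set of horizontal segments whose projections onto the x-axis form a proper set of intervals, and T a set of vertical segments. In the POSS problem (select minimum subset of S intersecting all of T), the ILP optimum is at most 8 times the LP-relaxation optimum. -/
attribute [local instance] Classical.propDecidable

/-- A horizontal segment at height `y` with `x`-range `[lo, hi]`. -/
structure HSeg where
  y : ℝ
  lo : ℝ
  hi : ℝ

/-- A horizontal segment intersects a vertical segment. -/
def hitsHV (s : HSeg) (v : VSeg) : Prop :=
  s.lo ≤ v.x ∧ v.x ≤ s.hi ∧ v.lo ≤ s.y ∧ s.y ≤ v.hi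

/-!
Since the projections are proper, one can choose a point set `P` meeting every projection
exactly once. The segments of `S` hitting a vertical segment `v` then have at most two points of
`P` in their projections, at most one on each side of `v`, so at least half of the LP mass of `v`
passes through the segments stabbed by a single `p ∈ P`. For fixed `p` and a fixed side of the
line `x = p`, each such segment acts as a ray from `p`, and a doubled LP solution of this one-sided
problem rounds, by a weighted-median recursion, to an integral solution of at most twice its
cost. The two sides and the factor two for halving give `2 · 2 + 2 · 2 = 8`.
-/

open Finset

theorem Finset.exists_weighted_median {α κ : Type*} [LinearOrder κ] (Q : Finset α)
    (y : α → κ) (w : α → ℝ) (hQ : Q.Nonempty) (hw : ∀ a ∈ Q, 0 ≤ w a) :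
    ∃ m ∈ Q, (∑ a ∈ Q, w a) / 2 ≤ ∑ a ∈ Q with y a ≤ y m, w a ∧
      (∑ a ∈ Q, w a) / 2 ≤ ∑ a ∈ Q with y m ≤ y a, w a := by
  set W := ∑ a ∈ Q, w a
  have hW : 0 ≤ W := sum_nonneg hw
  set C := Q.filter fun m => W / 2 ≤ ∑ a ∈ Q with y a ≤ y m, w a
  have hC : C.Nonempty := by
    obtain ⟨t, htQ, ht⟩ := Q.exists_max_image y hQ
    refine ⟨t, mem_filter.2 ⟨htQ, ?_⟩⟩
    rw [filter_true_of_mem ht]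
    linarith
  obtain ⟨m, hmC, hmin⟩ := C.exists_min_image y hC
  obtain ⟨hmQ, hm⟩ := mem_filter.1 hmC
  refine ⟨m, hmQ, hm, ?_⟩
  have hbelow : ∑ a ∈ Q with y a < y m, w a ≤ W / 2 := by
    rcases (Q.filter (y · < y m)).eq_empty_or_nonempty with hL | hL
    · rw [hL, sum_empty]
      linarith
    obtain ⟨m', hm'L, hmax⟩ := (Q.filter (y · < y m)).exists_max_image y hL
    obtain ⟨hm'Q, hm'm⟩ := mem_filter.1 hm'L
    have hm'C : m' ∉ C := fun h => (hmin m' h).not_gt hm'm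
    have hfilter : Q.filter (y · ≤ y m') = Q.filter (y · < y m) := by
      ext a
      simp only [mem_filter, and_congr_right_iff]
      exact fun ha => ⟨fun h => h.trans_lt hm'm, fun h => hmax a (mem_filter.2 ⟨ha, h⟩)⟩
    rw [← hfilter]
    exact (not_le.1 fun h => hm'C (mem_filter.2 ⟨hm'Q, h⟩)).le
  have hsplit := sum_filter_add_sum_filter_not Q (fun a => y a < y m) w
  simp only [not_lt] at hsplit
  linarith

theorem card_insert_union_le_two_mul_sub_one {α : Type*} [DecidableEq α] (m : α)
    (B₁ B₂ : Finset α) {W W₁ W₂ : ℝ} (hW : 1 ≤ W) (hW₁ : W₁ ≤ W - 1 / 2)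
    (hW₂ : W₂ ≤ W - 1 / 2) (hW₁₂ : W₁ + W₂ ≤ W) (hB₁ : B₁ = ∅ ∨ (#B₁ : ℝ) ≤ 2 * W₁ - 1)
    (hB₂ : B₂ = ∅ ∨ (#B₂ : ℝ) ≤ 2 * W₂ - 1) :
    (#(insert m (B₁ ∪ B₂)) : ℝ) ≤ 2 * W - 1 := by
  have hcard : (#(insert m (B₁ ∪ B₂)) : ℝ) ≤ 1 + #B₁ + #B₂ := by
    have := (card_insert_le m (B₁ ∪ B₂)).trans (Nat.succ_le_succ (card_union_le B₁ B₂))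
    exact_mod_cast (by omega : #(insert m (B₁ ∪ B₂)) ≤ 1 + #B₁ + #B₂)
  rcases hB₁ with rfl | hB₁ <;> rcases hB₂ with rfl | hB₂ <;>
    (try simp only [card_empty, Nat.cast_zero] at hcard) <;> linarith

theorem sum_filter_le_sum_sub_half {α : Type*} {A Q : Finset α} {w : α → ℝ}
    (hw : ∀ a ∈ A, 0 ≤ w a) (hQA : Q ⊆ A) (P : α → Prop)
    (hP : 1 / 2 ≤ ∑ a ∈ Q with ¬ P a, w a) :
    ∑ a ∈ A with P a, w a ≤ ∑ a ∈ A, w a - 1 / 2 := by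
  have hsplit := sum_filter_add_sum_filter_not A P w
  have hsub := sum_le_sum_of_subset_of_nonneg (filter_subset_filter (¬ P ·) hQA)
    fun a ha _ => hw a (mem_filter.1 ha).1
  linarith

theorem sum_filter_lt_add_sum_filter_gt_le {α κ : Type*} [LinearOrder κ] {A : Finset α}
    {w : α → ℝ} (hw : ∀ a ∈ A, 0 ≤ w a) (f : α → κ) (c : κ) :
    ∑ a ∈ A with f a < c, w a + ∑ a ∈ A with c < f a, w a ≤ ∑ a ∈ A, w a := by
  have hsplit := sum_filter_add_sum_filter_not A (f · < c) w
  have hsub := sum_le_sum_of_subset_of_nonneg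
    (monotone_filter_right A (p := (c < f ·)) (q := (¬ f · < c)) fun _ _ h => not_lt.2 h.le)
    fun a ha _ => hw a (mem_filter.1 ha).1
  linarith

section RayCover

variable {α β ι κ : Type*} [LinearOrder ι] [LinearOrder κ] {hits : α → β → Prop}
  {reach : α → ι} {height : α → κ} {thr : β → ι} {lo hi : β → κ}

theorem sum_filter_hits_eq_of_forall_mem_Icc {A : Finset α} {U : Finset β} (w : α → ℝ)
    (hhits : ∀ a ∈ A, ∀ v ∈ U, hits a v ↔ thr v ≤ reach a ∧ height a ∈ Set.Icc (lo v) (hi v))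
    {v : β} (hv : v ∈ U) {P : κ → Prop} (hvP : ∀ k ∈ Set.Icc (lo v) (hi v), P k) :
    ∑ a ∈ A.filter (P <| height ·) with hits a v, w a = ∑ a ∈ A with hits a v, w a := by
  rw [filter_filter]
  exact sum_congr (filter_congr fun a ha =>
    ⟨fun h => h.2, fun h => ⟨hvP _ ((hhits a ha v hv).1 h).2, h⟩⟩) fun _ _ => rfl

/- The query `v₀` with the largest threshold is covered by mass `≥ 1` of items that reach every
query; its weighted median `m` by height covers every query whose height range contains
`height m`, and the remaining queries lie entirely below or entirely above `height m`, where
each side has lost at least half of `v₀`'s mass. -/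
theorem exists_cover_eq_empty_or_card_le_two_mul_sub_one (A : Finset α) (U : Finset β)
    (w : α → ℝ) (hw : ∀ a ∈ A, 0 ≤ w a)
    (hhits : ∀ a ∈ A, ∀ v ∈ U, hits a v ↔ thr v ≤ reach a ∧ height a ∈ Set.Icc (lo v) (hi v))
    (hU : ∀ v ∈ U, 1 ≤ ∑ a ∈ A with hits a v, w a) :
    ∃ B ⊆ A, (∀ v ∈ U, ∃ a ∈ B, hits a v) ∧
      (B = ∅ ∨ (#B : ℝ) ≤ 2 * ∑ a ∈ A, w a - 1) := by
  induction U using Finset.strongInduction generalizing A with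
  | H U ih =>
  rcases U.eq_empty_or_nonempty with rfl | hUne
  · exact ⟨∅, empty_subset _, by simp, Or.inl rfl⟩
  obtain ⟨v₀, hv₀, hv₀max⟩ := U.exists_max_image thr hUne
  set Q := A.filter (hits · v₀)
  have hQ : 1 ≤ ∑ a ∈ Q, w a := hU v₀ hv₀
  have hQA : Q ⊆ A := filter_subset _ _
  obtain ⟨m, hmQ, hbelow, habove⟩ := Q.exists_weighted_median height w
    (nonempty_of_sum_ne_zero (f := w) (by linarith)) fun a ha => hw a (hQA ha)
  obtain ⟨hmA, hmv₀⟩ := mem_filter.1 hmQ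
  obtain ⟨hm_reach, hm_height⟩ := (hhits m hmA v₀ hv₀).1 hmv₀
  have recurse : ∀ P : κ → Prop, ¬ P (height m) →
      ∃ B ⊆ A.filter (P <| height ·),
        (∀ v ∈ U, (∀ k ∈ Set.Icc (lo v) (hi v), P k) → ∃ a ∈ B, hits a v) ∧
        (B = ∅ ∨ (#B : ℝ) ≤ 2 * ∑ a ∈ A with P (height a), w a - 1) := by
    intro P hP
    obtain ⟨B, hBA, hBU, hB⟩ := ih (U.filter fun v => ∀ k ∈ Set.Icc (lo v) (hi v), P k)
      (filter_ssubset.2 ⟨v₀, hv₀, fun h => hP (h _ hm_height)⟩) (A.filter (P <| height ·))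
      (fun a ha => hw a (filter_subset _ _ ha))
      (fun a ha v hv => hhits a (filter_subset _ _ ha) v (filter_subset _ _ hv))
      (fun v hv => by
        obtain ⟨hvU, hvP⟩ := mem_filter.1 hv
        rw [sum_filter_hits_eq_of_forall_mem_Icc w hhits hvU hvP]
        exact hU v hvU)
    exact ⟨B, hBA, fun v hv hvP => hBU v (mem_filter.2 ⟨hv, hvP⟩), hB⟩
  obtain ⟨B₁, hB₁A, hB₁U, hB₁⟩ := recurse (· < height m) (lt_irrefl _)
  obtain ⟨B₂, hB₂A, hB₂U, hB₂⟩ := recurse (height m < ·) (lt_irrefl _)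
  refine ⟨insert m (B₁ ∪ B₂), ?_, ?_, Or.inr ?_⟩
  · exact insert_subset hmA
      (union_subset (hB₁A.trans (filter_subset _ _)) (hB₂A.trans (filter_subset _ _)))
  · intro v hv
    by_cases h₁ : ∀ k ∈ Set.Icc (lo v) (hi v), k < height m
    · obtain ⟨a, ha, hav⟩ := hB₁U v hv h₁
      exact ⟨a, mem_insert_of_mem (mem_union_left _ ha), hav⟩
    by_cases h₂ : ∀ k ∈ Set.Icc (lo v) (hi v), height m < k
    · obtain ⟨a, ha, hav⟩ := hB₂U v hv h₂
      exact ⟨a, mem_insert_of_mem (mem_union_right _ ha), hav⟩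
    push Not at h₁ h₂
    obtain ⟨k₁, hk₁, hmk₁⟩ := h₁
    obtain ⟨k₂, hk₂, hk₂m⟩ := h₂
    exact ⟨m, mem_insert_self _ _, (hhits m hmA v hv).2
      ⟨(hv₀max v hv).trans hm_reach, hk₂.1.trans hk₂m, hmk₁.trans hk₁.2⟩⟩
  · exact card_insert_union_le_two_mul_sub_one m B₁ B₂
      (hQ.trans (sum_le_sum_of_subset_of_nonneg hQA fun a ha _ => hw a ha))
      (sum_filter_le_sum_sub_half hw hQA _ (by simp only [not_lt]; linarith))
      (sum_filter_le_sum_sub_half hw hQA _ (by simp only [not_lt]; linarith))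
      (sum_filter_lt_add_sum_filter_gt_le hw height (height m)) hB₁ hB₂

theorem exists_cover_card_le_two_mul_sum (A : Finset α) (U : Finset β) (w : α → ℝ)
    (hw : ∀ a ∈ A, 0 ≤ w a)
    (hhits : ∀ a ∈ A, ∀ v ∈ U, hits a v ↔ thr v ≤ reach a ∧ height a ∈ Set.Icc (lo v) (hi v))
    (hU : ∀ v ∈ U, 1 ≤ ∑ a ∈ A with hits a v, w a) :
    ∃ B ⊆ A, (∀ v ∈ U, ∃ a ∈ B, hits a v) ∧ (#B : ℝ) ≤ 2 * ∑ a ∈ A, w a := by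
  obtain ⟨B, hBA, hBU, hB⟩ := exists_cover_eq_empty_or_card_le_two_mul_sub_one A U w hw hhits hU
  refine ⟨B, hBA, hBU, ?_⟩
  rcases hB with rfl | hB
  · simpa using sum_nonneg hw
  · linarith

end RayCover

section ExactStabbing

variable {α ι : Type*} [LinearOrder ι]

/-- The point set `π '' S` meets every interval `[lo s, hi s]`, `s ∈ S`, exactly once. -/
def IsExactStabbing (S : Finset α) (lo hi : α → ι) (π : α → ι) : Prop :=
  (∀ s ∈ S, π s ∈ Set.Icc (lo s) (hi s)) ∧
    ∀ s ∈ S, ∀ s' ∈ S, π s' ∈ Set.Icc (lo s) (hi s) → π s' = π s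

variable {S : Finset α} {lo hi : α → ι} {π : α → ι}

theorem IsExactStabbing.insert [DecidableEq α] (hπ : IsExactStabbing S lo hi π) {a : α}
    (ha : a ∉ S) {p : ι} (hp : p ∈ Set.Icc (lo a) (hi a))
    (hold : ∀ s ∈ S, π s ∈ Set.Icc (lo a) (hi a) → π s = p)
    (hnew : ∀ s ∈ S, p ∈ Set.Icc (lo s) (hi s) → p = π s) :
    IsExactStabbing (insert a S) lo hi (Function.update π a p) := by
  have hne : ∀ s ∈ S, s ≠ a := fun s hs h => ha (h ▸ hs)
  constructor
  · intro s hs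
    rcases mem_insert.1 hs with rfl | hs
    · simpa using hp
    · simpa [Function.update_of_ne (hne s hs)] using hπ.1 s hs
  · intro s hs s' hs'
    rcases mem_insert.1 hs with rfl | hsS <;> rcases mem_insert.1 hs' with rfl | hs'S
    · simp
    · simpa [Function.update_of_ne (hne s' hs'S)] using hold s' hs'S
    · simpa [Function.update_of_ne (hne s hsS)] using hnew s hsS
    · simpa [Function.update_of_ne (hne s hsS), Function.update_of_ne (hne s' hs'S)]
        using hπ.2 s hsS s' hs'S

/- Induct on the intervals in order of their right endpoints. The new interval `I` either
contains an old point, which is then unique by properness, or it contains none and its right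
endpoint lies in no old interval, since an old interval containing it would contain `I`. -/
theorem exists_isExactStabbing (S : Finset α) (lo hi : α → ι) (hS : ∀ s ∈ S, lo s ≤ hi s)
    (proper : ∀ s ∈ S, ∀ s' ∈ S, s ≠ s' →
      ¬ Set.Icc (lo s') (hi s') ⊆ Set.Icc (lo s) (hi s)) :
    ∃ π, IsExactStabbing S lo hi π := by
  classical
  induction S using Finset.induction_on_max_value hi with
  | empty => exact ⟨lo, by simp [IsExactStabbing]⟩
  | insert a S ha hmax ih =>
  obtain ⟨π, hπ⟩ := ih (fun s hs => hS s (mem_insert_of_mem hs))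
    fun s hs s' hs' => proper s (mem_insert_of_mem hs) s' (mem_insert_of_mem hs')
  have hne : ∀ s ∈ S, a ≠ s := fun s hs h => ha (h ▸ hs)
  by_cases hex : ∃ b ∈ S, π b ∈ Set.Icc (lo a) (hi a)
  · obtain ⟨b, hb, hbI⟩ := hex
    have huniq : ∀ c ∈ S, π c ∈ Set.Icc (lo a) (hi a) → π c = π b := by
      intro c hc hcI
      wlog hle : π b ≤ π c generalizing b c
      · exact (this c hc hcI b hb hbI (le_of_not_ge hle)).symm
      by_contra h
      have hlt : π b < lo c :=
        lt_of_not_ge fun h' => h (hπ.2 c hc b hb ⟨h', hle.trans (hπ.1 c hc).2⟩).symm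
      exact proper a (mem_insert_self a S) c (mem_insert_of_mem hc) (hne c hc)
        (Set.Icc_subset_Icc (hbI.1.trans hlt.le) (hmax c hc))
    exact ⟨_, hπ.insert ha hbI huniq fun s hs hsI => hπ.2 s hs b hb hsI⟩
  · push Not at hex
    refine ⟨_, hπ.insert ha ⟨hS a (mem_insert_self a S), le_rfl⟩
      (fun s hs hsI => absurd hsI (hex s hs)) fun s hs hsI => ?_⟩
    exfalso
    have hlt : π s < lo a :=
      lt_of_not_ge fun h => hex s hs ⟨h, (hπ.1 s hs).2.trans (hmax s hs)⟩
    exact proper s (mem_insert_of_mem hs) a (mem_insert_self a S) (hne s hs).symm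
      (Set.Icc_subset_Icc ((hπ.1 s hs).1.trans hlt.le) hsI.2)

theorem IsExactStabbing.eq_of_le (hπ : IsExactStabbing S lo hi π) {s s' : α} (hs : s ∈ S)
    (hs' : s' ∈ S) {t : ι} (ht : t ∈ Set.Icc (lo s) (hi s)) (ht' : t ∈ Set.Icc (lo s') (hi s'))
    (h : π s ≤ t) (h' : π s' ≤ t) : π s = π s' := by
  wlog hle : π s ≤ π s' generalizing s s'
  · exact (this hs' hs ht' ht h' h (le_of_not_ge hle)).symm
  exact (hπ.2 s hs s' hs' ⟨(hπ.1 s hs).1.trans hle, h'.trans ht.2⟩).symm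

theorem IsExactStabbing.eq_of_lt (hπ : IsExactStabbing S lo hi π) {s s' : α} (hs : s ∈ S)
    (hs' : s' ∈ S) {t : ι} (ht : t ∈ Set.Icc (lo s) (hi s)) (ht' : t ∈ Set.Icc (lo s') (hi s'))
    (h : t < π s) (h' : t < π s') : π s = π s' := by
  wlog hle : π s ≤ π s' generalizing s s'
  · exact (this hs' hs ht' ht h' h (le_of_not_ge hle)).symm
  exact hπ.2 s' hs' s hs ⟨ht'.1.trans h.le, hle.trans (hπ.1 s' hs').2⟩

theorem IsExactStabbing.card_image_le_two (hπ : IsExactStabbing S lo hi π) {H : Finset α}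
    (hH : H ⊆ S) {t : ι} (ht : ∀ s ∈ H, t ∈ Set.Icc (lo s) (hi s)) : #(H.image π) ≤ 2 := by
  rw [← card_filter_add_card_filter_not (· ≤ t)]
  refine Nat.add_le_add (card_le_one.2 ?_) (card_le_one.2 ?_) <;>
    simp only [mem_filter, mem_image, not_le] <;>
    rintro _ ⟨⟨s, hs, rfl⟩, h⟩ _ ⟨⟨s', hs', rfl⟩, h'⟩
  · exact hπ.eq_of_le (hH hs) (hH hs') (ht s hs) (ht s' hs') h h'
  · exact hπ.eq_of_lt (hH hs) (hH hs') (ht s hs) (ht s' hs') h h'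

theorem IsExactStabbing.exists_half_le_sum_fiber (hπ : IsExactStabbing S lo hi π)
    {H : Finset α} (hH : H ⊆ S) {t : ι} (ht : ∀ s ∈ H, t ∈ Set.Icc (lo s) (hi s))
    (x : α → ℝ) (hx : 1 ≤ ∑ s ∈ H, x s) :
    ∃ p ∈ H.image π, 1 / 2 ≤ ∑ s ∈ H with π s = p, x s := by
  refine exists_le_sum_fiber_of_maps_to_of_nsmul_le_sum (fun s hs => mem_image_of_mem π hs)
    ((nonempty_of_sum_ne_zero (f := x) (by linarith)).image π) ?_
  have := hπ.card_image_le_two hH ht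
  rw [nsmul_eq_mul]
  have : (#(H.image π) : ℝ) ≤ 2 := by exact_mod_cast this
  linarith

end ExactStabbing

theorem exists_hitting_subset_of_right_of_line (A : Finset HSeg) (U : Finset VSeg) (p : ℝ)
    (hA : ∀ a ∈ A, a.lo ≤ p) (hU : ∀ v ∈ U, p ≤ v.x) (x : HSeg → ℝ) (hx : ∀ a ∈ A, 0 ≤ x a)
    (hUx : ∀ v ∈ U, 1 / 2 ≤ ∑ a ∈ A with hitsHV a v, x a) :
    ∃ B ⊆ A, (∀ v ∈ U, ∃ a ∈ B, hitsHV a v) ∧ (#B : ℝ) ≤ 4 * ∑ a ∈ A, x a := by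
  obtain ⟨B, hBA, hBU, hB⟩ := exists_cover_card_le_two_mul_sum (hits := hitsHV) (reach := HSeg.hi)
    (height := HSeg.y) (thr := VSeg.x) (lo := VSeg.lo) (hi := VSeg.hi) A U (2 * x ·)
    (fun a ha => mul_nonneg zero_le_two (hx a ha))
    (fun a ha v hv => ⟨fun h => h.2, fun h => ⟨(hA a ha).trans (hU v hv), h⟩⟩)
    (fun v hv => by rw [← mul_sum]; linarith [hUx v hv])
  rw [← mul_sum] at hB
  exact ⟨B, hBA, hBU, by linarith⟩

theorem exists_hitting_subset_of_left_of_line (A : Finset HSeg) (U : Finset VSeg) (p : ℝ)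
    (hA : ∀ a ∈ A, p ≤ a.hi) (hU : ∀ v ∈ U, v.x ≤ p) (x : HSeg → ℝ) (hx : ∀ a ∈ A, 0 ≤ x a)
    (hUx : ∀ v ∈ U, 1 / 2 ≤ ∑ a ∈ A with hitsHV a v, x a) :
    ∃ B ⊆ A, (∀ v ∈ U, ∃ a ∈ B, hitsHV a v) ∧ (#B : ℝ) ≤ 4 * ∑ a ∈ A, x a := by
  obtain ⟨B, hBA, hBU, hB⟩ := exists_cover_card_le_two_mul_sum
    (hits := hitsHV) (reach := fun a => OrderDual.toDual a.lo) (height := HSeg.y)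
    (thr := fun v => OrderDual.toDual v.x) (lo := VSeg.lo) (hi := VSeg.hi) A U (2 * x ·)
    (fun a ha => mul_nonneg zero_le_two (hx a ha))
    (fun a ha v hv => ⟨fun h => ⟨h.1, h.2.2⟩, fun h => ⟨h.1, (hU v hv).trans (hA a ha), h.2⟩⟩)
    (fun v hv => by rw [← mul_sum]; linarith [hUx v hv])
  rw [← mul_sum] at hB
  exact ⟨B, hBA, hBU, by linarith⟩

theorem exists_hitting_subset_card_le_eight_mul (S : Finset HSeg) (T : Finset VSeg)
    (hS : ∀ s ∈ S, s.lo ≤ s.hi)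
    (proper : ∀ s ∈ S, ∀ s' ∈ S, s ≠ s' → ¬ Set.Icc s'.lo s'.hi ⊆ Set.Icc s.lo s.hi)
    (x : HSeg → ℝ) (hx : ∀ s ∈ S, 0 ≤ x s)
    (hxT : ∀ v ∈ T, 1 ≤ ∑ s ∈ S with hitsHV s v, x s) :
    ∃ D ⊆ S, (∀ v ∈ T, ∃ s ∈ D, hitsHV s v) ∧ (#D : ℝ) ≤ 8 * ∑ s ∈ S, x s := by
  obtain ⟨π, hπ⟩ := exists_isExactStabbing S HSeg.lo HSeg.hi hS proper
  have hfiber : ∀ p, ∀ a ∈ S.filter (π · = p), a.lo ≤ p ∧ p ≤ a.hi := fun p a ha => by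
    obtain ⟨haS, rfl⟩ := mem_filter.1 ha
    exact hπ.1 a haS
  have hxfiber : ∀ p, ∀ a ∈ S.filter (π · = p), 0 ≤ x a :=
    fun p a ha => hx a (filter_subset _ _ ha)
  choose BR hBRS hBR hBRcard using fun p => exists_hitting_subset_of_right_of_line _
    (T.filter fun v => p ≤ v.x ∧ 1 / 2 ≤ ∑ a ∈ S.filter (π · = p) with hitsHV a v, x a) p
    (fun a ha => (hfiber p a ha).1) (fun v hv => (mem_filter.1 hv).2.1) x (hxfiber p)
    (fun v hv => (mem_filter.1 hv).2.2)
  choose BL hBLS hBL hBLcard using fun p => exists_hitting_subset_of_left_of_line _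
    (T.filter fun v => v.x ≤ p ∧ 1 / 2 ≤ ∑ a ∈ S.filter (π · = p) with hitsHV a v, x a) p
    (fun a ha => (hfiber p a ha).2) (fun v hv => (mem_filter.1 hv).2.1) x (hxfiber p)
    (fun v hv => (mem_filter.1 hv).2.2)
  refine ⟨(S.image π).biUnion fun p => BR p ∪ BL p, ?_, ?_, ?_⟩
  · exact biUnion_subset.2 fun p _ =>
      union_subset ((hBRS p).trans (filter_subset _ _)) ((hBLS p).trans (filter_subset _ _))
  · intro v hv
    obtain ⟨p, hp, hpv⟩ := hπ.exists_half_le_sum_fiber (filter_subset (hitsHV · v) S)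
      (t := v.x) (fun s hs => ⟨(mem_filter.1 hs).2.1, (mem_filter.1 hs).2.2.1⟩) x (hxT v hv)
    rw [filter_comm] at hpv
    have hpS : p ∈ S.image π := image_subset_image (filter_subset _ _) hp
    rcases le_total p v.x with h | h
    · obtain ⟨a, ha, hav⟩ := hBR p v (mem_filter.2 ⟨hv, h, hpv⟩)
      exact ⟨a, mem_biUnion.2 ⟨p, hpS, mem_union_left _ ha⟩, hav⟩
    · obtain ⟨a, ha, hav⟩ := hBL p v (mem_filter.2 ⟨hv, h, hpv⟩)
      exact ⟨a, mem_biUnion.2 ⟨p, hpS, mem_union_right _ ha⟩, hav⟩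
  · calc (#((S.image π).biUnion fun p => BR p ∪ BL p) : ℝ)
        ≤ ∑ p ∈ S.image π, ((#(BR p) : ℝ) + #(BL p)) := by
          exact_mod_cast card_biUnion_le.trans (sum_le_sum fun p _ => card_union_le _ _)
      _ ≤ ∑ p ∈ S.image π, 8 * ∑ s ∈ S with π s = p, x s :=
          sum_le_sum fun p _ => by linarith [hBRcard p, hBLcard p]
      _ = 8 * ∑ s ∈ S, x s := by
          rw [← mul_sum, sum_fiberwise_of_maps_to fun s hs => mem_image_of_mem π hs]

theorem POSS_integrality_gap_le_8_general (S : Finset HSeg) (T : Finset VSeg)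
    (hS : ∀ s ∈ S, s.lo ≤ s.hi)
    (proper : ∀ s ∈ S, ∀ s' ∈ S, s ≠ s' →
      ¬ Set.Icc s'.lo s'.hi ⊆ Set.Icc s.lo s.hi)
    (hfeas : ∀ v ∈ T, ∃ s ∈ S, hitsHV s v) :
    sInf {c : ℝ | ∃ D : Finset HSeg, D ⊆ S ∧ (∀ v ∈ T, ∃ s ∈ D, hitsHV s v) ∧
        c = D.card}
      ≤ 8 * sInf {c : ℝ | ∃ x : HSeg → ℝ, (∀ s, 0 ≤ x s ∧ x s ≤ 1) ∧
        (∀ v ∈ T, 1 ≤ ∑ s ∈ S.filter (fun s => hitsHV s v), x s) ∧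
        c = ∑ s ∈ S, x s} := by
  have hLP : Set.Nonempty {c : ℝ | ∃ x : HSeg → ℝ, (∀ s, 0 ≤ x s ∧ x s ≤ 1) ∧
      (∀ v ∈ T, 1 ≤ ∑ s ∈ S.filter (fun s => hitsHV s v), x s) ∧ c = ∑ s ∈ S, x s} := by
    refine ⟨_, fun _ => 1, fun _ => ⟨zero_le_one, le_rfl⟩, fun v hv => ?_, rfl⟩
    obtain ⟨s, hs, hsv⟩ := hfeas v hv
    simpa using card_pos.2 ⟨s, mem_filter.2 ⟨hs, hsv⟩⟩
  rw [← div_le_iff₀' (by norm_num : (0 : ℝ) < 8)]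
  refine le_csInf hLP ?_
  rintro _ ⟨x, hx, hxT, rfl⟩
  obtain ⟨D, hDS, hDT, hD⟩ :=
    exists_hitting_subset_card_le_eight_mul S T hS proper x (fun s _ => (hx s).1) hxT
  rw [div_le_iff₀' (by norm_num : (0 : ℝ) < 8)]
  refine (csInf_le ⟨0, ?_⟩ ?_).trans hD
  · rintro _ ⟨D, -, -, rfl⟩
    positivity
  · exact ⟨D, hDS, hDT, rfl⟩

/-- POSS: for a set `S` of horizontal segments whose `x`-axis
projections form a proper family of intervals and a set `T` of vertical segments,
the optimum of the ILP (choose a minimum subset of `S` intersecting all of `T`)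
is at most `8` times the optimum of its LP relaxation. -/
theorem POSS_integrality_gap_le_8 (S : Finset HSeg) (T : Finset VSeg)
    (hS : ∀ s ∈ S, s.lo ≤ s.hi) (hT : ∀ v ∈ T, v.lo ≤ v.hi)
    (proper : ∀ s ∈ S, ∀ s' ∈ S, s ≠ s' →
      ¬ Set.Icc s'.lo s'.hi ⊆ Set.Icc s.lo s.hi)
    (hfeas : ∀ v ∈ T, ∃ s ∈ S, hitsHV s v) :
    sInf {c : ℝ | ∃ D : Finset HSeg, D ⊆ S ∧ (∀ v ∈ T, ∃ s ∈ D, hitsHV s v) ∧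
        c = D.card}
      ≤ 8 * sInf {c : ℝ | ∃ x : HSeg → ℝ, (∀ s, 0 ≤ x s ∧ x s ≤ 1) ∧
        (∀ v ∈ T, 1 ≤ ∑ s ∈ S.filter (fun s => hitsHV s v), x s) ∧
        c = ∑ s ∈ S, x s} :=
  POSS_integrality_gap_le_8_general S T hS proper hfeas
end

section
/- Let H be a set of horizontal segments and V a set of vertical segments such that their axis projections form proper sets of intervals (PROPER-SEG-DOM instance). Let Z be the ILP of choosing a minimum subset of H ∪ V intersecting every segment of H ∪ V. If the 'same-orientation' sub-ILP Z' has integral LP (OPT(Z') = OPT(Z'_l)) and the 'cross-orientation' sub-ILP Z'' satisfies OPT(Z'') ≤ 8·OPT(Z''_l), then OPT(Z) ≤ 18·OPT(Z_l). -/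
attribute [local instance] Classical.propDecidable

/-- The point set of an axis-parallel segment (horizontal or vertical). -/
def segPts : HSeg ⊕ VSeg → Set (ℝ × ℝ)
  | .inl s => {p | p.2 = s.y ∧ s.lo ≤ p.1 ∧ p.1 ≤ s.hi}
  | .inr v => {p | p.1 = v.x ∧ v.lo ≤ p.2 ∧ p.2 ≤ v.hi}

/-- Two segments intersect. -/
def meets (a b : HSeg ⊕ VSeg) : Prop := (segPts a ∩ segPts b).Nonempty

/-- Two segments have the same orientation. -/
def sameOrient (a b : HSeg ⊕ VSeg) : Prop := a.isLeft = b.isLeft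

/-- `N_o u`: the segments of `G` of the same orientation as `u` intersecting `u`. -/
noncomputable def No (G : Finset (HSeg ⊕ VSeg)) (u : HSeg ⊕ VSeg) :
    Finset (HSeg ⊕ VSeg) :=
  G.filter (fun w => sameOrient u w ∧ meets u w)

/-- `N u \ N_o u`: the segments of `G` of the opposite orientation intersecting `u`. -/
noncomputable def Ncross (G : Finset (HSeg ⊕ VSeg)) (u : HSeg ⊕ VSeg) :
    Finset (HSeg ⊕ VSeg) :=
  G.filter (fun w => ¬ sameOrient u w ∧ meets u w)

/-!
Split the constraints of `Z` by the half-rounding of the fractional solution `x*`: since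
`∑_{N_o(u)} x* + ∑_{N(u) \ N_o(u)} x* ≥ 1`, one of the two sums is at least `1/2`, so the union of
an optimal solution of `Z'` and one of `Z''` dominates every segment. Doubling `x*` (capped at `1`)
is feasible for both relaxations, whence `OPT(Z'_l), OPT(Z''_l) ≤ 2·OPT(Z_l)` and
`OPT(Z) ≤ OPT(Z') + OPT(Z'') ≤ 2·OPT(Z_l) + 8·2·OPT(Z_l)`.
-/

open Finset

theorem Finset.one_le_sum_min_one {ι : Type*} {s : Finset ι} {f : ι → ℝ}
    (hf : ∀ i ∈ s, 0 ≤ f i) (hsum : 1 ≤ ∑ i ∈ s, f i) : 1 ≤ ∑ i ∈ s, min (f i) 1 := by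
  by_cases hbig : ∃ i ∈ s, 1 ≤ f i
  · obtain ⟨i, hi, hfi⟩ := hbig
    calc (1 : ℝ) = min (f i) 1 := (min_eq_right hfi).symm
      _ ≤ ∑ j ∈ s, min (f j) 1 :=
        single_le_sum (fun j hj => le_min (hf j hj) zero_le_one) hi
  · push Not at hbig
    rwa [sum_congr rfl fun i hi => min_eq_left (hbig i hi).le]

theorem exists_card_eq_sInf_card {α : Type*} {P : Finset α → Prop} (h : ∃ D, P D) :
    ∃ D, P D ∧ sInf {c : ℝ | ∃ D, P D ∧ c = D.card} = D.card := by
  classical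
  obtain ⟨D₀, hD₀⟩ := h
  have hn : ∃ n, ∃ D, P D ∧ D.card = n := ⟨_, D₀, hD₀, rfl⟩
  obtain ⟨D, hD, hcard⟩ := Nat.find_spec hn
  refine ⟨D, hD, IsLeast.csInf_eq ⟨⟨D, hD, rfl⟩, ?_⟩⟩
  rintro _ ⟨D', hD', rfl⟩
  rw [hcard]
  exact_mod_cast Nat.find_min' hn ⟨D', hD', rfl⟩

section HalfRounding

variable {α : Type*} [DecidableEq α] (G : Finset α) (N : α → Finset α) (xs : α → ℝ)

/- The sub-problems of the half-rounding of `xs` for the neighbourhoods `N`: the constraint of `u`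
is kept when `∑_{N u} xs ≥ 1/2`, and only neighbours of kept constraints may be chosen.
`N = No G` gives `Z'`, `N = Ncross G` gives `Z''`. -/

noncomputable def halfRoundingSupport : Finset α :=
  G.filter (fun w => ∃ u ∈ G, (1/2 : ℝ) ≤ ∑ w' ∈ N u, xs w' ∧ w ∈ N u)

noncomputable def halfRoundingILP : ℝ :=
  sInf {c : ℝ | ∃ D : Finset α, D ⊆ halfRoundingSupport G N xs ∧
    (∀ u ∈ G, (1/2 : ℝ) ≤ ∑ w' ∈ N u, xs w' → ∃ w ∈ D, w ∈ N u) ∧ c = D.card}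

noncomputable def halfRoundingLP : ℝ :=
  sInf {c : ℝ | ∃ x : α → ℝ, (∀ w, 0 ≤ x w ∧ x w ≤ 1) ∧
    (∀ w, w ∉ halfRoundingSupport G N xs → x w = 0) ∧
    (∀ u ∈ G, (1/2 : ℝ) ≤ ∑ w' ∈ N u, xs w' → 1 ≤ ∑ w ∈ N u, x w) ∧ c = ∑ w ∈ G, x w}

variable {G N xs}

theorem mem_halfRoundingSupport_of_mem {u w : α} (hN : N u ⊆ G) (hu : u ∈ G)
    (hhalf : (1/2 : ℝ) ≤ ∑ w' ∈ N u, xs w') (hw : w ∈ N u) :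
    w ∈ halfRoundingSupport G N xs :=
  mem_filter.mpr ⟨hN hw, u, hu, hhalf, hw⟩

theorem exists_card_eq_halfRoundingILP (hN : ∀ u, N u ⊆ G) :
    ∃ D ⊆ G, (∀ u ∈ G, (1/2 : ℝ) ≤ ∑ w' ∈ N u, xs w' → ∃ w ∈ D, w ∈ N u) ∧
      (D.card : ℝ) = halfRoundingILP G N xs := by
  have hfeasible : ∀ u ∈ G, (1/2 : ℝ) ≤ ∑ w' ∈ N u, xs w' →
      ∃ w ∈ halfRoundingSupport G N xs, w ∈ N u := by
    intro u hu hhalf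
    obtain ⟨w, hw⟩ : (N u).Nonempty := nonempty_of_sum_ne_zero (f := xs) (by linarith)
    exact ⟨w, mem_halfRoundingSupport_of_mem (hN u) hu hhalf hw, hw⟩
  obtain ⟨D, ⟨hDsupp, hDhit⟩, hcard⟩ :=
    exists_card_eq_sInf_card (P := fun D => D ⊆ halfRoundingSupport G N xs ∧
      ∀ u ∈ G, (1/2 : ℝ) ≤ ∑ w' ∈ N u, xs w' → ∃ w ∈ D, w ∈ N u) ⟨_, subset_rfl, hfeasible⟩
  refine ⟨D, hDsupp.trans (filter_subset _ _), hDhit, ?_⟩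
  rw [← hcard, halfRoundingILP]
  simp only [and_assoc]

theorem halfRoundingLP_le_two_mul (hN : ∀ u, N u ⊆ G) (hxs : ∀ w, 0 ≤ xs w) :
    halfRoundingLP G N xs ≤ 2 * ∑ w ∈ G, xs w := by
  set F := halfRoundingSupport G N xs
  set x : α → ℝ := fun w => if w ∈ F then min (2 * xs w) 1 else 0 with hx
  have hx_bound : ∀ w, 0 ≤ x w ∧ x w ≤ 1 := by
    intro w
    by_cases hw : w ∈ F
    · simp only [hx, if_pos hw]
      exact ⟨le_min (by linarith [hxs w]) zero_le_one, min_le_right _ _⟩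
    · simp [hx, hw]
  have hx_le : ∀ w, x w ≤ 2 * xs w := by
    intro w
    by_cases hw : w ∈ F
    · simp only [hx, if_pos hw]; exact min_le_left _ _
    · simp only [hx, if_neg hw]; linarith [hxs w]
  have hx_feas : ∀ u ∈ G, (1/2 : ℝ) ≤ ∑ w' ∈ N u, xs w' → 1 ≤ ∑ w ∈ N u, x w := by
    intro u hu hhalf
    rw [sum_congr rfl fun w hw => if_pos (mem_halfRoundingSupport_of_mem (hN u) hu hhalf hw)]
    exact one_le_sum_min_one (fun w _ => by linarith [hxs w]) (by rw [← mul_sum]; linarith)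
  have hbdd : BddBelow {c : ℝ | ∃ x : α → ℝ, (∀ w, 0 ≤ x w ∧ x w ≤ 1) ∧
      (∀ w, w ∉ F → x w = 0) ∧
      (∀ u ∈ G, (1/2 : ℝ) ≤ ∑ w' ∈ N u, xs w' → 1 ≤ ∑ w ∈ N u, x w) ∧ c = ∑ w ∈ G, x w} :=
    ⟨0, by rintro _ ⟨y, hy, -, -, rfl⟩; exact sum_nonneg fun w _ => (hy w).1⟩
  calc halfRoundingLP G N xs ≤ ∑ w ∈ G, x w :=
        csInf_le hbdd ⟨x, hx_bound, fun w hw => if_neg hw, hx_feas, rfl⟩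
    _ ≤ ∑ w ∈ G, 2 * xs w := sum_le_sum fun w _ => hx_le w
    _ = 2 * ∑ w ∈ G, xs w := (mul_sum _ _ _).symm

end HalfRounding

theorem No_subset (G : Finset (HSeg ⊕ VSeg)) (u : HSeg ⊕ VSeg) : No G u ⊆ G := filter_subset _ _

theorem Ncross_subset (G : Finset (HSeg ⊕ VSeg)) (u : HSeg ⊕ VSeg) : Ncross G u ⊆ G :=
  filter_subset _ _

theorem meets_of_mem_No {G : Finset (HSeg ⊕ VSeg)} {u w : HSeg ⊕ VSeg} (hw : w ∈ No G u) :
    meets u w :=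
  (mem_filter.mp hw).2.2

theorem meets_of_mem_Ncross {G : Finset (HSeg ⊕ VSeg)} {u w : HSeg ⊕ VSeg} (hw : w ∈ Ncross G u) :
    meets u w :=
  (mem_filter.mp hw).2.2

open Finset in
theorem properSegDom_18_of_subproblems_general (G : Finset (HSeg ⊕ VSeg))
    (xs : HSeg ⊕ VSeg → ℝ)
    (hbound : ∀ w, 0 ≤ xs w ∧ xs w ≤ 1)
    (hfeas : ∀ u ∈ G, 1 ≤ ∑ w ∈ No G u, xs w + ∑ w ∈ Ncross G u, xs w)
    -- OPT(Z') = OPT(Z'_l)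
    (hZ' : sInf {c : ℝ | ∃ D : Finset (HSeg ⊕ VSeg),
        D ⊆ G.filter (fun w => ∃ u ∈ G, (1/2 : ℝ) ≤ ∑ w' ∈ No G u, xs w' ∧ w ∈ No G u) ∧
        (∀ u ∈ G, (1/2 : ℝ) ≤ ∑ w' ∈ No G u, xs w' → ∃ w ∈ D, w ∈ No G u) ∧
        c = D.card}
      = sInf {c : ℝ | ∃ x : HSeg ⊕ VSeg → ℝ, (∀ w, 0 ≤ x w ∧ x w ≤ 1) ∧
        (∀ w, w ∉ G.filter (fun w => ∃ u ∈ G, (1/2 : ℝ) ≤ ∑ w' ∈ No G u, xs w' ∧ w ∈ No G u) → x w = 0) ∧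
        (∀ u ∈ G, (1/2 : ℝ) ≤ ∑ w' ∈ No G u, xs w' → 1 ≤ ∑ w ∈ No G u, x w) ∧
        c = ∑ w ∈ G, x w})
    -- OPT(Z'') ≤ 8 · OPT(Z''_l)
    (hZ'' : sInf {c : ℝ | ∃ D : Finset (HSeg ⊕ VSeg),
        D ⊆ G.filter (fun w => ∃ u ∈ G, (1/2 : ℝ) ≤ ∑ w' ∈ Ncross G u, xs w' ∧ w ∈ Ncross G u) ∧
        (∀ u ∈ G, (1/2 : ℝ) ≤ ∑ w' ∈ Ncross G u, xs w' → ∃ w ∈ D, w ∈ Ncross G u) ∧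
        c = D.card}
      ≤ 8 * sInf {c : ℝ | ∃ x : HSeg ⊕ VSeg → ℝ, (∀ w, 0 ≤ x w ∧ x w ≤ 1) ∧
        (∀ w, w ∉ G.filter (fun w => ∃ u ∈ G, (1/2 : ℝ) ≤ ∑ w' ∈ Ncross G u, xs w' ∧ w ∈ Ncross G u) → x w = 0) ∧
        (∀ u ∈ G, (1/2 : ℝ) ≤ ∑ w' ∈ Ncross G u, xs w' → 1 ≤ ∑ w ∈ Ncross G u, x w) ∧
        c = ∑ w ∈ G, x w}) :
    -- OPT(Z) ≤ 18 · OPT(Z_l)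
    sInf {c : ℝ | ∃ D : Finset (HSeg ⊕ VSeg), D ⊆ G ∧
        (∀ u ∈ G, ∃ w ∈ D, meets u w) ∧ c = D.card}
      ≤ 18 * ∑ w ∈ G, xs w := by
  change halfRoundingILP G (No G) xs = halfRoundingLP G (No G) xs at hZ'
  change halfRoundingILP G (Ncross G) xs ≤ 8 * halfRoundingLP G (Ncross G) xs at hZ''
  have hxs : ∀ w, 0 ≤ xs w := fun w => (hbound w).1
  obtain ⟨D₁, hD₁G, hD₁, hcard₁⟩ := exists_card_eq_halfRoundingILP (xs := xs) (No_subset G)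
  obtain ⟨D₂, hD₂G, hD₂, hcard₂⟩ := exists_card_eq_halfRoundingILP (xs := xs) (Ncross_subset G)
  have hdom : ∀ u ∈ G, ∃ w ∈ D₁ ∪ D₂, meets u w := by
    intro u hu
    by_cases hsame : (1/2 : ℝ) ≤ ∑ w ∈ No G u, xs w
    · obtain ⟨w, hw, hwN⟩ := hD₁ u hu hsame
      exact ⟨w, mem_union_left _ hw, meets_of_mem_No hwN⟩
    · obtain ⟨w, hw, hwN⟩ := hD₂ u hu (by linarith [hfeas u hu])
      exact ⟨w, mem_union_right _ hw, meets_of_mem_Ncross hwN⟩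
  have hLP₁ := halfRoundingLP_le_two_mul (No_subset G) hxs
  have hLP₂ := halfRoundingLP_le_two_mul (Ncross_subset G) hxs
  calc _ ≤ ((D₁ ∪ D₂).card : ℝ) := by
        exact csInf_le ⟨0, by rintro _ ⟨D, -, -, rfl⟩; positivity⟩ ⟨_, union_subset hD₁G hD₂G, hdom, rfl⟩
    _ ≤ D₁.card + D₂.card := by exact_mod_cast card_union_le _ _
    _ = halfRoundingLP G (No G) xs + halfRoundingILP G (Ncross G) xs := by rw [hcard₁, hcard₂, hZ']
    _ ≤ 18 * ∑ w ∈ G, xs w := by linarith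

open Finset in
/-- PROPER-SEG-DOM: let `G = H ∪ V` be horizontal and vertical
segments whose axis projections are proper interval families, `Z` the ILP of
dominating every segment of `G` by a minimum subset of `G`, `x*` an optimal solution
of its relaxation `Z_l`, and `Z'`, `Z''` the same-orientation and cross-orientation
sub-ILPs obtained by half-rounding.  If `OPT(Z') = OPT(Z'_l)` and
`OPT(Z'') ≤ 8·OPT(Z''_l)`, then `OPT(Z) ≤ 18·OPT(Z_l)`. -/
theorem properSegDom_18_of_subproblems (G : Finset (HSeg ⊕ VSeg))
    (hok : ∀ a ∈ G, (segPts a).Nonempty)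
    (properH : ∀ s ∈ G, ∀ s' ∈ G, s.isLeft → s'.isLeft → s ≠ s' →
      ∀ a b : HSeg, s = .inl a → s' = .inl b → ¬ Set.Icc b.lo b.hi ⊆ Set.Icc a.lo a.hi)
    (properV : ∀ s ∈ G, ∀ s' ∈ G, s.isRight → s'.isRight → s ≠ s' →
      ∀ a b : VSeg, s = .inr a → s' = .inr b → ¬ Set.Icc b.lo b.hi ⊆ Set.Icc a.lo a.hi)
    (xs : HSeg ⊕ VSeg → ℝ)
    (hbound : ∀ w, 0 ≤ xs w ∧ xs w ≤ 1)
    (hfeas : ∀ u ∈ G, 1 ≤ ∑ w ∈ No G u, xs w + ∑ w ∈ Ncross G u, xs w)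
    (hopt : ∀ x' : HSeg ⊕ VSeg → ℝ, (∀ w, 0 ≤ x' w ∧ x' w ≤ 1) →
      (∀ u ∈ G, 1 ≤ ∑ w ∈ No G u, x' w + ∑ w ∈ Ncross G u, x' w) →
      ∑ w ∈ G, xs w ≤ ∑ w ∈ G, x' w)
    -- OPT(Z') = OPT(Z'_l)
    (hZ' : sInf {c : ℝ | ∃ D : Finset (HSeg ⊕ VSeg),
        D ⊆ G.filter (fun w => ∃ u ∈ G, (1/2 : ℝ) ≤ ∑ w' ∈ No G u, xs w' ∧ w ∈ No G u) ∧
        (∀ u ∈ G, (1/2 : ℝ) ≤ ∑ w' ∈ No G u, xs w' → ∃ w ∈ D, w ∈ No G u) ∧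
        c = D.card}
      = sInf {c : ℝ | ∃ x : HSeg ⊕ VSeg → ℝ, (∀ w, 0 ≤ x w ∧ x w ≤ 1) ∧
        (∀ w, w ∉ G.filter (fun w => ∃ u ∈ G, (1/2 : ℝ) ≤ ∑ w' ∈ No G u, xs w' ∧ w ∈ No G u) → x w = 0) ∧
        (∀ u ∈ G, (1/2 : ℝ) ≤ ∑ w' ∈ No G u, xs w' → 1 ≤ ∑ w ∈ No G u, x w) ∧
        c = ∑ w ∈ G, x w})
    -- OPT(Z'') ≤ 8 · OPT(Z''_l)
    (hZ'' : sInf {c : ℝ | ∃ D : Finset (HSeg ⊕ VSeg),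
        D ⊆ G.filter (fun w => ∃ u ∈ G, (1/2 : ℝ) ≤ ∑ w' ∈ Ncross G u, xs w' ∧ w ∈ Ncross G u) ∧
        (∀ u ∈ G, (1/2 : ℝ) ≤ ∑ w' ∈ Ncross G u, xs w' → ∃ w ∈ D, w ∈ Ncross G u) ∧
        c = D.card}
      ≤ 8 * sInf {c : ℝ | ∃ x : HSeg ⊕ VSeg → ℝ, (∀ w, 0 ≤ x w ∧ x w ≤ 1) ∧
        (∀ w, w ∉ G.filter (fun w => ∃ u ∈ G, (1/2 : ℝ) ≤ ∑ w' ∈ Ncross G u, xs w' ∧ w ∈ Ncross G u) → x w = 0) ∧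
        (∀ u ∈ G, (1/2 : ℝ) ≤ ∑ w' ∈ Ncross G u, xs w' → 1 ≤ ∑ w ∈ Ncross G u, x w) ∧
        c = ∑ w ∈ G, x w}) :
    -- OPT(Z) ≤ 18 · OPT(Z_l)
    sInf {c : ℝ | ∃ D : Finset (HSeg ⊕ VSeg), D ⊆ G ∧
        (∀ u ∈ G, ∃ w ∈ D, meets u w) ∧ c = D.card}
      ≤ 18 * ∑ w ∈ G, xs w :=
  properSegDom_18_of_subproblems_general G xs hbound hfeas hZ' hZ''
end
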